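/- arXiv:2405.16035 — 7 statements merged into one kernel-verified Lean document; each statement's English description precedes it below -/
import Mathlib

section
/- A semidirected graph N (with undirected edge set E_U and directed edge set E_D) is acyclic if and only if the undirected graph induced by its undirected edges E_U is a forest, and the directed graph obtained by contracting every undirected edge of N is acyclic. -/
open Relation

/-- A semidirected graph: a set of undirected edges and a set of directed edges. -/
structure SDG (V : Type) where
  undir : Finset (Sym2 V)
  dir : Finset (V × V)

namespace SDG

variable {V : Type} [DecidableEq V]

/-- one step along a directed edge -/
def dstep (N : SDG V) (u v : V) : Prop := (u, v) ∈ N.dir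

/-- one step along an undirected edge -/
def ustep (N : SDG V) (u v : V) : Prop := s(u, v) ∈ N.undir

/-- one step of a semidirected path -/
def sstep (N : SDG V) (u v : V) : Prop := N.dstep u v ∨ N.ustep u v

/-- directed reachability (existence of a directed path) -/
def dreach (N : SDG V) : V → V → Prop := ReflTransGen N.dstep

/-- reachability using undirected edges only -/
def ureach (N : SDG V) : V → V → Prop := ReflTransGen N.ustep

/-- semidirected reachability (existence of a semidirected path) -/
def sreach (N : SDG V) : V → V → Prop := ReflTransGen N.sstep

/-- `M` is obtained from `N` by directing some of the undirected edges of `N`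
(each such edge receiving exactly one direction). -/
def Directs (N M : SDG V) : Prop :=
  M.undir ⊆ N.undir ∧ N.dir ⊆ M.dir ∧
    (∀ e ∈ M.dir, e ∉ N.dir → s(e.1, e.2) ∈ N.undir ∧ s(e.1, e.2) ∉ M.undir) ∧
    (∀ p ∈ N.undir, p ∉ M.undir →
      ∃! e : V × V, e ∈ M.dir ∧ e ∉ N.dir ∧ s(e.1, e.2) = p)

/-- a semidirected graph is directed when it has no undirected edges -/
def IsDirected (N : SDG V) : Prop := N.undir = ∅

/-- existence of a directed cycle -/
def HasDirCycle (N : SDG V) : Prop := ∃ e ∈ N.dir, N.dreach e.2 e.1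

/-- `N` is acyclic if no compatible directed graph (obtained by directing all
undirected edges) has a directed cycle. -/
def Acyclic (N : SDG V) : Prop :=
  ∀ G : SDG V, Directs N G → G.IsDirected → ¬ G.HasDirCycle

/-- in-degree: number of incoming directed edges -/
def ideg (N : SDG V) (v : V) : ℕ := (N.dir.filter fun e => e.2 = v).card

/-- out-degree: number of outgoing directed edges -/
def odeg (N : SDG V) (v : V) : ℕ := (N.dir.filter fun e => e.1 = v).card

/-- number of incident undirected edges -/
def udeg (N : SDG V) (v : V) : ℕ := (N.undir.filter fun p => v ∈ p).card

/-- total degree -/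
def deg (N : SDG V) (v : V) : ℕ := N.ideg v + N.odeg v + N.udeg v

/-- hybrid edges: directed edges whose child is a hybrid node (in-degree ≥ 2) -/
def hybridEdges (N : SDG V) : Finset (V × V) := N.dir.filter fun e => 2 ≤ N.ideg e.2

/-- no self-loops, and no undirected edge parallel to a directed edge -/
def Proper (N : SDG V) : Prop :=
  (∀ p ∈ N.undir, ¬ p.IsDiag) ∧ (∀ e ∈ N.dir, e.1 ≠ e.2) ∧
    ∀ e ∈ N.dir, s(e.1, e.2) ∉ N.undir

/-- `M` is phylogenetically compatible with `N`: `M` is an SDAG obtained from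
`N` by directing some undirected edges, keeping the same hybrid edges. -/
def PhyloCompat (M N : SDG V) : Prop :=
  Directs N M ∧ M.Acyclic ∧ M.hybridEdges = N.hybridEdges

/-- a rooted partner of `N`: a DAG phylogenetically compatible with `N` -/
def RootedPartner (G N : SDG V) : Prop := PhyloCompat G N ∧ G.IsDirected

/-- a network: an SDAG admitting a rooted partner -/
def IsNetwork (N : SDG V) : Prop := N.Acyclic ∧ ∃ G : SDG V, RootedPartner G N

/-- mutual semidirected reachability (same undirected component) -/
def sim (N : SDG V) (u v : V) : Prop := N.sreach u v ∧ N.sreach v u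

/-- `v` lies in a root component: its undirected component is maximal for the
semidirected-path preorder -/
def InRootComp (N : SDG V) (v : V) : Prop := ∀ u, N.sreach u v → N.sreach v u

/-- the undirected simple graph induced by the undirected edges -/
def undirGraph (N : SDG V) : SimpleGraph V :=
  SimpleGraph.fromEdgeSet (N.undir : Set (Sym2 V))

/-- leaf in some rooted partner -/
def IsUnrootedLeaf (N : SDG V) (v : V) : Prop :=
  ∃ G : SDG V, RootedPartner G N ∧ G.odeg v = 0

/-- leaf in every rooted partner -/
def IsRootedLeaf (N : SDG V) (v : V) : Prop :=
  ∀ G : SDG V, RootedPartner G N → G.odeg v = 0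

/-- a leaf-labeled network: a network whose unrooted leaves are all rooted leaves
(so that its leaf set is stable across rooted partners and can be labeled) -/
def LNetwork (N : SDG V) : Prop :=
  IsNetwork N ∧ ∀ v, IsUnrootedLeaf N v → IsRootedLeaf N v

/-- `l` is (the list of nodes of) a directed path from `u` to `v` in `G` -/
def IsDPathList (G : SDG V) (u v : V) (l : List V) : Prop :=
  l.head? = some u ∧ l.getLast? = some v ∧ l.Chain' G.dstep

/-- the number of directed paths from `u` to `v` -/
noncomputable def pathCount (G : SDG V) (u v : V) : ℕ :=
  Set.ncard {l : List V | IsDPathList G u v l}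

/-- the set of directed paths starting at `v` -/
def startPaths (G : SDG V) (v : V) : Set (List V) :=
  {l : List V | l.head? = some v ∧ l.Chain' G.dstep}

/-- a root choice function: picks one node in each root component, constant on
root components, and the identity outside of root components -/
def RootChoice (N : SDG V) (ρ : V → V) : Prop :=
  (∀ v, InRootComp N v → sim N v (ρ v) ∧ ∀ u, InRootComp N u → sim N u v → ρ u = ρ v) ∧
    ∀ v, ¬ InRootComp N v → ρ v = v

/-- `G` is the rooted partner of `N` whose set of roots (in-degree 0 nodes) is the
image of the root choice function `ρ` -/
def PartnerFor (N : SDG V) (ρ : V → V) (G : SDG V) : Prop :=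
  RootedPartner G N ∧ {v | G.ideg v = 0} = ρ '' {v | InRootComp N v}

-- the directional μ-vector of `(u, v)`: path counts from `v` to each node in any
-- rooted partner directing the edge `uv` as `(u, v)`
open Classical in
noncomputable def muD (N : SDG V) (u v : V) : V → ℕ :=
  if h : ∃ G : SDG V, RootedPartner G N ∧ (u, v) ∈ G.dir then
    fun x => pathCount h.choose v x
  else fun _ => 0

-- the root μ-vector of the root component of `t`
open Classical in
noncomputable def muR (N : SDG V) (t : V) : V → ℕ :=
  if h : ∃ p : (V → V) × SDG V, RootChoice N p.1 ∧ PartnerFor N p.1 p.2 then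
    fun x => pathCount h.choose.2 (h.choose.1 t) x
  else fun _ => 0

/-- a DAG is tree-child if every non-leaf node has a tree-node child -/
def TreeChildDAG (G : SDG V) : Prop :=
  ∀ v, 0 < G.odeg v → ∃ w, (v, w) ∈ G.dir ∧ G.ideg w ≤ 1

/-- all rooted partners are tree-child -/
def StronglyTreeChild (N : SDG V) : Prop :=
  ∀ G : SDG V, RootedPartner G N → TreeChildDAG G

/-- some rooted partner is tree-child -/
def WeaklyTreeChild (N : SDG V) : Prop :=
  ∃ G : SDG V, RootedPartner G N ∧ TreeChildDAG G

/-- coordinatewise comparison of μ-vectors over the leaves of `N` -/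
def muLE (N : SDG V) (m m' : V → ℕ) : Prop :=
  ∀ x, IsUnrootedLeaf N x → m x ≤ m' x

/-- incomparability of μ-vectors (over the leaves of `N`) -/
def muIncomp (N : SDG V) (m m' : V → ℕ) : Prop :=
  ¬ muLE N m m' ∧ ¬ muLE N m' m

/-- a network is complete when every undirected edge lies in a root component
(equivalently, it equals its completion) -/
def Complete (N : SDG V) : Prop := ∀ p ∈ N.undir, ∀ v ∈ p, InRootComp N v

/-- reachability by a tree path (directed path whose edges are all tree edges) -/
def treeReach (G : SDG V) : V → V → Prop :=
  ReflTransGen fun a b => (a, b) ∈ G.dir ∧ G.ideg b ≤ 1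

/-- `v` has a tree descendant leaf -/
def HasTreeDescLeaf (G : SDG V) (v : V) : Prop := ∃ x, G.odeg x = 0 ∧ treeReach G v x

/-- `l` is an elementary path from `u` to `v`: a directed path whose first node
has out-degree 1 and whose intermediate nodes have in- and out-degree 1 -/
def IsElemPathList (G : SDG V) (u v : V) (l : List V) : Prop :=
  l.head? = some u ∧ l.getLast? = some v ∧ l.Chain' G.dstep ∧ 2 ≤ l.length ∧
    G.odeg u = 1 ∧ ∀ w ∈ (l.drop 1).dropLast, G.ideg w = 1 ∧ G.odeg w = 1

/-- an elementary node: a tree node with out-degree = total degree = 1, or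
out-degree < total degree = 2 -/
def IsElemNode (G : SDG V) (v : V) : Prop :=
  G.ideg v ≤ 1 ∧ ((G.odeg v = 1 ∧ G.deg v = 1) ∨ (G.odeg v < G.deg v ∧ G.deg v = 2))

/-- the setoid identifying nodes connected by undirected edges -/
def usetoid (N : SDG V) : Setoid V :=
  ⟨Relation.EqvGen N.ustep, Relation.EqvGen.is_equivalence _⟩

/-- the edge relation of the contraction of `N`: the directed graph on the
quotient by undirected connectivity, with the directed edges of `N` -/
def crel (N : SDG V) (x y : Quotient N.usetoid) : Prop :=
  ∃ u v : V, (u, v) ∈ N.dir ∧ Quotient.mk N.usetoid u = x ∧ Quotient.mk N.usetoid v = y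


end SDG

/-!
If the undirected part contains a cycle, orienting it cyclically (and the other undirected edges
arbitrarily) yields a directed cycle. If the contraction has a cycle, it can be taken simple;
joining its directed edges by undirected paths inside the distinct components they connect, and
orienting these edge-disjoint paths forwards, again yields a directed cycle.

Conversely, a directed cycle of an orientation either passes through a directed edge of `N`, and
then projects to a cycle of the contraction, or consists of oriented undirected edges `a → b ⇝ a`.
In the latter case the return path `b ⇝ a` can be chosen never to re-enter `b`, so it avoids the
edge `ab` (oriented in one direction only): `ab` is not a bridge and the undirected part is not a
forest.
-/

namespace Relation

variable {α : Type*} {r : α → α → Prop} {a b : α}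

theorem ReflTransGen.exists_nodup_isChain (h : ReflTransGen r a b) :
    ∃ l : List α, (a :: l).IsChain r ∧ (a :: l).getLast (List.cons_ne_nil _ _) = b ∧
      (a :: l).Nodup := by
  induction h using ReflTransGen.head_induction_on with
  | refl => exact ⟨[], .singleton _, rfl, List.nodup_singleton _⟩
  | @head a c hac _ ih =>
    obtain ⟨l, hchain, hlast, hnodup⟩ := ih
    by_cases ha : a ∈ c :: l
    · obtain ⟨s, t, hst⟩ := List.append_of_mem ha
      have hsuffix : a :: t <:+ c :: l := hst ▸ List.suffix_append s (a :: t)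
      refine ⟨t, hchain.suffix hsuffix, ?_, hnodup.sublist hsuffix.sublist⟩
      rw [← hlast]
      simp [hst]
    · refine ⟨c :: l, List.isChain_cons_cons.2 ⟨hac, hchain⟩, ?_, List.nodup_cons.2 ⟨ha, hnodup⟩⟩
      rwa [List.getLast_cons_cons]

theorem ReflTransGen.avoid_source (h : ReflTransGen r a b) :
    ReflTransGen (fun x y => r x y ∧ y ≠ a) a b := by
  induction h with
  | refl => exact .refl
  | @tail c d _ hcd ih =>
    by_cases hd : d = a
    · exact hd ▸ .refl
    · exact ih.tail ⟨hcd, hd⟩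

end Relation

theorem SimpleGraph.Walk.reflTransGen_of_darts_subset {W : Type*} {H : SimpleGraph W}
    {S : Set (W × W)} {u v : W} (w : H.Walk u v) (hS : ∀ d ∈ w.darts, d.toProd ∈ S) :
    Relation.ReflTransGen (fun x y => (x, y) ∈ S) u v := by
  induction w with
  | nil => exact .refl
  | @cons u x v h p ih =>
    exact .head (hS ⟨(u, x), h⟩ (by simp)) (ih fun d hd => hS d (by simp [hd]))

namespace SDG

variable {V : Type} {N G : SDG V}

abbrev ucomp (N : SDG V) (v : V) : Quotient N.usetoid := Quotient.mk N.usetoid v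

theorem ucomp_eq_of_ustep {u v : V} (h : N.ustep u v) : N.ucomp u = N.ucomp v :=
  Quotient.sound (Relation.EqvGen.rel _ _ h)

theorem ustep_of_undirGraph_adj {u v : V} (h : N.undirGraph.Adj u v) : N.ustep u v := by
  rw [undirGraph, SimpleGraph.fromEdgeSet_adj] at h
  exact h.1

theorem undirGraph_adj_of_ustep (hP : N.Proper) {u v : V} (h : N.ustep u v) :
    N.undirGraph.Adj u v := by
  rw [undirGraph, SimpleGraph.fromEdgeSet_adj]
  refine ⟨h, fun huv => hP.1 _ h ?_⟩
  rw [huv, Sym2.mk_isDiag_iff]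

theorem undirGraph_reachable_iff {u v : V} :
    N.undirGraph.Reachable u v ↔ N.ucomp u = N.ucomp v := by
  constructor
  · rw [SimpleGraph.reachable_iff_reflTransGen]
    intro h
    induction h with
    | refl => rfl
    | tail _ hxy ih => exact ih.trans (ucomp_eq_of_ustep (ustep_of_undirGraph_adj hxy))
  · intro h
    replace h : Relation.EqvGen N.ustep u v := Quotient.exact h
    induction h with
    | @rel x y hxy =>
      by_cases hne : x = y
      · exact hne ▸ .rfl
      · exact SimpleGraph.Adj.reachable
          ((SimpleGraph.fromEdgeSet_adj _).2 ⟨hxy, hne⟩)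
    | refl => exact .rfl
    | symm _ _ _ ih => exact ih.symm
    | trans _ _ _ _ _ ih₁ ih₂ => exact ih₁.trans ih₂

def Oriented (N G : SDG V) (x y : V) : Prop := (x, y) ∈ G.dir ∧ (x, y) ∉ N.dir

theorem Directs.ustep_of_oriented (hd : N.Directs G) {x y : V} (h : Oriented N G x y) :
    N.ustep x y :=
  (hd.2.2.1 (x, y) h.1 h.2).1

theorem Directs.not_oriented_swap (hd : N.Directs G) (hu : G.IsDirected) {x y : V} (hxy : x ≠ y)
    (h : Oriented N G x y) : ¬ Oriented N G y x := by
  intro h'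
  have hnot : s(x, y) ∉ G.undir := by simp [show G.undir = ∅ from hu]
  obtain ⟨e, -, huniq⟩ := hd.2.2.2 _ (hd.ustep_of_oriented h) hnot
  have := (huniq (x, y) ⟨h.1, h.2, rfl⟩).trans (huniq (y, x) ⟨h'.1, h'.2, Sym2.eq_swap⟩).symm
  exact hxy (congrArg Prod.fst this)

theorem Directs.reflTransGen_crel (hd : N.Directs G) {a b : V} (h : G.dreach a b) :
    ReflTransGen N.crel (N.ucomp a) (N.ucomp b) := by
  induction h with
  | refl => exact .refl
  | @tail b c _ hbc ih =>
    by_cases hN : (b, c) ∈ N.dir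
    · exact ih.tail ⟨b, c, hN, rfl, rfl⟩
    · rwa [← ucomp_eq_of_ustep (hd.ustep_of_oriented ⟨hbc, hN⟩)]

theorem dreach_oriented_or_exists_dir {a b : V} (h : G.dreach a b) :
    ReflTransGen (Oriented N G) a b ∨
      ∃ x y, (x, y) ∈ N.dir ∧ G.dreach a x ∧ G.dreach y b := by
  induction h with
  | refl => exact .inl .refl
  | @tail b c hab hbc ih =>
    by_cases hN : (b, c) ∈ N.dir
    · exact .inr ⟨b, c, hN, hab, .refl⟩
    · rcases ih with ih | ⟨x, y, hxy, hax, hyb⟩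
      · exact .inl (ih.tail ⟨hbc, hN⟩)
      · exact .inr ⟨x, y, hxy, hax, hyb.tail hbc⟩

theorem not_isAcyclic_of_oriented_cycle (hP : N.Proper) (hd : N.Directs G) (hu : G.IsDirected)
    {a b : V} (hab : Oriented N G a b) (hba : ReflTransGen (Oriented N G) b a) :
    ¬ N.undirGraph.IsAcyclic := by
  have hadj : N.undirGraph.Adj a b := undirGraph_adj_of_ustep hP (hd.ustep_of_oriented hab)
  have hreach : (N.undirGraph.deleteEdges {s(a, b)}).Reachable b a := by
    rw [SimpleGraph.reachable_iff_reflTransGen]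
    refine ReflTransGen.mono ?_ _ _ hba.avoid_source
    rintro x y ⟨hxy, hyb⟩
    rw [SimpleGraph.deleteEdges_adj, Set.mem_singleton_iff, Sym2.eq_iff]
    refine ⟨undirGraph_adj_of_ustep hP (hd.ustep_of_oriented hxy), ?_⟩
    rintro (⟨rfl, rfl⟩ | ⟨rfl, rfl⟩)
    · exact hyb rfl
    · exact hd.not_oriented_swap hu hadj.ne hab hxy
  exact fun hF => SimpleGraph.isBridge_iff.1
    (SimpleGraph.isAcyclic_iff_forall_adj_isBridge.1 hF hadj) hreach.symm

def IsPartialOrientation (N : SDG V) (D : Set (V × V)) : Prop :=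
  (∀ d ∈ D, N.ustep d.1 d.2) ∧ D.InjOn Sym2.mk.uncurry

theorem IsPartialOrientation.union {D₁ D₂ : Set (V × V)} (h₁ : N.IsPartialOrientation D₁)
    (h₂ : N.IsPartialOrientation D₂)
    (h₁₂ : ∀ d₁ ∈ D₁, ∀ d₂ ∈ D₂, Sym2.mk.uncurry d₁ ≠ Sym2.mk.uncurry d₂) :
    N.IsPartialOrientation (D₁ ∪ D₂) :=
  ⟨fun d hd => hd.elim (h₁.1 d) (h₂.1 d),
    (Set.injOn_union (Set.disjoint_left.2 fun d hd₁ hd₂ => h₁₂ d hd₁ d hd₂ rfl)).2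
      ⟨h₁.2, h₂.2, h₁₂⟩⟩

theorem IsPartialOrientation.exists_compatible (hP : N.Proper) {D : Set (V × V)}
    (hD : N.IsPartialOrientation D) :
    ∃ G : SDG V, N.Directs G ∧ G.IsDirected ∧ ↑N.dir ∪ D ⊆ ↑G.dir := by
  classical
  let o : Sym2 V → V × V := fun p =>
    if h : ∃ d ∈ D, Sym2.mk.uncurry d = p then h.choose else Quot.out p
  have hmk (p : Sym2 V) : Sym2.mk.uncurry (o p) = p := by
    by_cases h : ∃ d ∈ D, Sym2.mk.uncurry d = p
    · simpa [o, h] using h.choose_spec.2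
    · simp only [o, h, dite_false]
      exact Quot.out_eq p
  have ho_of_mem {d : V × V} (hd : d ∈ D) : o (Sym2.mk.uncurry d) = d := by
    have h : ∃ d' ∈ D, Sym2.mk.uncurry d' = Sym2.mk.uncurry d := ⟨d, hd, rfl⟩
    simpa [o, h] using hD.2 h.choose_spec.1 hd h.choose_spec.2
  have ho_notMem {p : Sym2 V} (hp : p ∈ N.undir) : o p ∉ N.dir := fun hdir =>
    hP.2.2 _ hdir (by rwa [← hmk p] at hp)
  refine ⟨⟨∅, N.dir ∪ N.undir.image o⟩, ⟨Finset.empty_subset _, Finset.subset_union_left,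
    ?_, ?_⟩, rfl, ?_⟩
  · intro e he heN
    obtain ⟨p, hp, rfl⟩ := Finset.mem_image.1 ((Finset.mem_union.1 he).resolve_left heN)
    exact ⟨by rwa [← hmk p] at hp, Finset.notMem_empty _⟩
  · refine fun p hp _ => ⟨o p, ⟨Finset.mem_union_right _ (Finset.mem_image_of_mem o hp),
      ho_notMem hp, hmk p⟩, ?_⟩
    rintro e ⟨he, heN, rfl⟩
    obtain ⟨q, -, rfl⟩ := Finset.mem_image.1 ((Finset.mem_union.1 he).resolve_left heN)
    rw [show s((o q).1, (o q).2) = q from hmk q]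
  · rintro d (hd | hd)
    · exact Finset.mem_union_left _ hd
    · exact Finset.mem_union_right _ (Finset.mem_image.2 ⟨_, hD.1 d hd, ho_of_mem hd⟩)

theorem isPartialOrientation_darts {u v : V} (w : N.undirGraph.Walk u v) (hw : w.edges.Nodup) :
    N.IsPartialOrientation (SimpleGraph.Dart.toProd '' {d | d ∈ w.darts}) := by
  refine ⟨?_, ?_⟩
  · rintro _ ⟨d, -, rfl⟩
    exact ustep_of_undirGraph_adj d.adj
  · rintro _ ⟨d, hd, rfl⟩ _ ⟨d', hd', rfl⟩ he
    exact congrArg _ (List.inj_on_of_nodup_map (f := SimpleGraph.Dart.edge) hw hd hd' he)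

theorem exists_isPartialOrientation_of_ucomp_eq {a b : V} (h : N.ucomp a = N.ucomp b) :
    ∃ D : Set (V × V), N.IsPartialOrientation D ∧ (∀ d ∈ D, N.ucomp d.1 = N.ucomp a) ∧
      ReflTransGen (fun x y => (x, y) ∈ D) a b := by
  classical
  obtain ⟨w⟩ := undirGraph_reachable_iff.2 h
  refine ⟨_, isPartialOrientation_darts w.bypass w.bypass_isPath.isTrail.edges_nodup, ?_,
    w.bypass.reflTransGen_of_darts_subset fun d hd => ⟨d, hd, rfl⟩⟩
  rintro _ ⟨d, hd, rfl⟩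
  exact (undirGraph_reachable_iff.1
    ⟨w.bypass.takeUntil _ (w.bypass.dart_fst_mem_support_of_mem_darts hd)⟩).symm

-- The components along the chain are distinct, so the undirected paths chosen inside them
-- share no edge and can be oriented simultaneously.
theorem exists_isPartialOrientation_of_isChain_crel (c : Quotient N.usetoid) (L : List _)
    (hC : (c :: L).IsChain N.crel) (hnd : (c :: L).Nodup) {b t : V} (hb : N.ucomp b = c)
    (ht : N.ucomp t = (c :: L).getLast (List.cons_ne_nil _ _)) :
    ∃ D : Set (V × V), N.IsPartialOrientation D ∧ (∀ d ∈ D, N.ucomp d.1 ∈ c :: L) ∧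
      ReflTransGen (fun x y => (x, y) ∈ ↑N.dir ∪ D) b t := by
  induction L generalizing c b with
  | nil =>
    obtain ⟨D, hD, hcomp, hreach⟩ := exists_isPartialOrientation_of_ucomp_eq (hb.trans ht.symm)
    exact ⟨D, hD, fun d hd => by simp [hcomp d hd, hb],
      ReflTransGen.mono (fun _ _ => Or.inr) _ _ hreach⟩
  | cons c' L ih =>
    obtain ⟨⟨u, v, huv, rfl, rfl⟩, hC'⟩ := List.isChain_cons_cons.1 hC
    obtain ⟨D₁, hD₁, hcomp₁, hreach₁⟩ := exists_isPartialOrientation_of_ucomp_eq hb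
    obtain ⟨D₂, hD₂, hcomp₂, hreach₂⟩ :=
      ih _ hC' hnd.of_cons rfl (by rwa [List.getLast_cons_cons] at ht)
    have hdisj : ∀ d₁ ∈ D₁, ∀ d₂ ∈ D₂, Sym2.mk.uncurry d₁ ≠ Sym2.mk.uncurry d₂ := by
      intro d₁ hd₁ d₂ hd₂ he
      have hd₂₁ : N.ucomp d₂.1 = N.ucomp u := by
        rcases Sym2.eq_iff.1 he with ⟨h, -⟩ | ⟨-, h⟩
        · rw [← h, hcomp₁ d₁ hd₁, hb]
        · rw [← h, ← ucomp_eq_of_ustep (hD₁.1 d₁ hd₁), hcomp₁ d₁ hd₁, hb]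
      have hmem := hcomp₂ d₂ hd₂
      rw [hd₂₁] at hmem
      exact (List.nodup_cons.1 hnd).1 hmem
    refine ⟨D₁ ∪ D₂, hD₁.union hD₂ hdisj, ?_, ?_⟩
    · rintro d (hd | hd)
      · simp [hcomp₁ d hd, hb]
      · exact List.mem_cons_of_mem _ (hcomp₂ d hd)
    · refine ((ReflTransGen.mono ?_ _ _ hreach₁).tail (Or.inl huv)).trans
        (ReflTransGen.mono ?_ _ _ hreach₂)
      · exact fun _ _ h => Or.inr (Or.inl h)
      · exact fun _ _ h => h.imp_right Or.inr

theorem Acyclic.not_reflTransGen_of_isPartialOrientation (hP : N.Proper) (hA : N.Acyclic)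
    {D : Set (V × V)} (hD : N.IsPartialOrientation D) {u v : V} (huv : (u, v) ∈ ↑N.dir ∪ D) :
    ¬ ReflTransGen (fun x y => (x, y) ∈ ↑N.dir ∪ D) v u := fun hvu => by
  obtain ⟨G, hd, hu, hsub⟩ := hD.exists_compatible hP
  exact hA G hd hu ⟨(u, v), hsub huv, ReflTransGen.mono (fun _ _ h => hsub h) _ _ hvu⟩

theorem Acyclic.undirGraph_isAcyclic (hP : N.Proper) (hA : N.Acyclic) :
    N.undirGraph.IsAcyclic := by
  intro v c hc
  cases c with
  | nil => exact hc.ne_nil rfl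
  | @cons _ w _ h q =>
    refine hA.not_reflTransGen_of_isPartialOrientation hP
      (isPartialOrientation_darts _ hc.edges_nodup) (u := v) (v := w)
      (Or.inr ⟨⟨(v, w), h⟩, by simp, rfl⟩) ?_
    exact q.reflTransGen_of_darts_subset fun d hd => Or.inr ⟨d, by simp [hd], rfl⟩

theorem Acyclic.not_reflTransGen_crel (hP : N.Proper) (hA : N.Acyclic)
    {x y : Quotient N.usetoid} (hxy : N.crel x y) : ¬ ReflTransGen N.crel y x := by
  intro hyx
  obtain ⟨u, v, huv, rfl, rfl⟩ := hxy
  obtain ⟨L, hC, hlast, hnd⟩ := hyx.exists_nodup_isChain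
  obtain ⟨D, hD, -, hvu⟩ := exists_isPartialOrientation_of_isChain_crel _ L hC hnd rfl hlast.symm
  exact hA.not_reflTransGen_of_isPartialOrientation hP hD (Or.inl huv) hvu

theorem acyclic_of_undirGraph_isAcyclic_of_crel (hP : N.Proper) (hF : N.undirGraph.IsAcyclic)
    (hC : ∀ x y : Quotient N.usetoid, N.crel x y → ¬ ReflTransGen N.crel y x) : N.Acyclic := by
  rintro G hd hu ⟨e, he, hcycle⟩
  have not_through_dir {x y : V} (hxy : (x, y) ∈ N.dir) (hyx : G.dreach y x) : False :=
    hC _ _ ⟨x, y, hxy, rfl, rfl⟩ (hd.reflTransGen_crel hyx)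
  by_cases heN : e ∈ N.dir
  · exact not_through_dir heN hcycle
  · rcases dreach_oriented_or_exists_dir hcycle with hor | ⟨x, y, hxy, hex, hye⟩
    · exact not_isAcyclic_of_oriented_cycle hP hd hu ⟨he, heN⟩ hor hF
    · exact not_through_dir hxy (hye.trans (ReflTransGen.head he hex))

theorem statement_0_general {V : Type} (N : SDG V) (hP : N.Proper) :
    N.Acyclic ↔
      N.undirGraph.IsAcyclic ∧
        ∀ x y : Quotient N.usetoid, crel N x y → ¬ ReflTransGen (crel N) y x :=
  ⟨fun hA => ⟨hA.undirGraph_isAcyclic hP, fun _ _ => hA.not_reflTransGen_crel hP⟩,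
    fun ⟨hF, hC⟩ => acyclic_of_undirGraph_isAcyclic_of_crel hP hF hC⟩

theorem statement_0 {V : Type} [DecidableEq V] (N : SDG V) (hP : N.Proper) :
    N.Acyclic ↔
      N.undirGraph.IsAcyclic ∧
        ∀ x y : Quotient N.usetoid, crel N x y → ¬ ReflTransGen (crel N) y x :=
  statement_0_general N hP

end SDG
end

section
/- In a semidirected acyclic graph N, for any two nodes u and v, u ~ v (i.e., there are semidirected paths both from u to v and from v to u) if and only if there is a path between u and v using only undirected edges. -/
open Relation

namespace SDG

variable {V : Type} [DecidableEq V]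

lemma sym2_rep {V : Type} (p : Sym2 V) : ∃ ab : V × V, s(ab.1, ab.2) = p := by
  induction p using Sym2.ind with
  | _ a b => exact ⟨(a, b), rfl⟩

lemma chain_dedup {r : V → V → Prop} :
    ∀ n (l : List V), l.length ≤ n → l.Chain' r →
      ∃ m : List V, m.Nodup ∧ m.Chain' r ∧ m.head? = l.head? ∧
        m.getLast? = l.getLast? ∧ m ⊆ l := by
  intro n
  induction n with
  | zero =>
    intro l hl _
    have : l = [] := List.length_eq_zero_iff.mp (Nat.le_zero.mp hl)
    subst this
    exact ⟨[], by simp, List.isChain_nil, rfl, rfl, by simp⟩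
  | succ n ih =>
    intro l hl hc
    match l with
    | [] => exact ⟨[], by simp, List.isChain_nil, rfl, rfl, by simp⟩
    | a :: t =>
      by_cases ha : a ∈ t
      · obtain ⟨t1, t2, rfl⟩ := List.append_of_mem ha
        have heq : a :: (t1 ++ a :: t2) = (a :: t1) ++ (a :: t2) := by simp
        have hsuf : (a :: t2) <:+ a :: (t1 ++ a :: t2) := ⟨a :: t1, heq.symm⟩
        have hc2 : (a :: t2).Chain' r := hc.suffix hsuf
        have hlen : (a :: t2).length ≤ n := by
          simp only [List.length_cons, List.length_append] at hl ⊢; omega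
        obtain ⟨m, hm1, hm2, hm3, hm4, hm5⟩ := ih _ hlen hc2
        refine ⟨m, hm1, hm2, by rw [hm3]; rfl, ?_, fun x hx => hsuf.subset (hm5 hx)⟩
        rw [hm4, heq, List.getLast?_append]
        cases h : (a :: t2).getLast? with
        | none => exact absurd (List.getLast?_eq_none_iff.mp h) (by simp)
        | some x => simp
      · cases t with
        | nil => exact ⟨[a], by simp, List.isChain_singleton _, rfl, rfl, by simp⟩
        | cons b t' =>
          have hc' : (b :: t').Chain' r := (List.isChain_cons_cons.mp hc).2
          obtain ⟨m, hm1, hm2, hm3, hm4, hm5⟩ :=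
            ih (b :: t') (by simp only [List.length_cons] at hl ⊢; omega) hc'
          have hmb : m.head? = some b := hm3
          refine ⟨a :: m, ?_, ?_, rfl, ?_, ?_⟩
          · exact List.nodup_cons.mpr ⟨fun h => ha (hm5 h), hm1⟩
          · refine List.isChain_cons.mpr ⟨?_, hm2⟩
            intro y hy
            rw [hmb] at hy
            have : b = y := by simpa using hy
            exact this ▸ (List.isChain_cons_cons.mp hc).1
          · cases m with
            | nil => exact absurd hmb (by simp)
            | cons c m'' =>
              rw [List.getLast?_cons_cons, hm4, List.getLast?_cons_cons]
          · exact List.cons_subset.mpr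
              ⟨List.mem_cons_self, fun x hx => List.mem_cons_of_mem a (hm5 hx)⟩

lemma no_back (N : SDG V) (hP : N.Proper) (hacy : N.Acyclic) {u w : V}
    (hd : (u, w) ∈ N.dir) (hr : N.sreach w u) : False := by
  classical
  obtain ⟨l0, hchain, hlast⟩ := List.exists_isChain_cons_of_relationReflTransGen hr
  have hC : (w :: l0).Chain' N.sstep := hchain
  obtain ⟨m, hnd, hcm, hh, hl, -⟩ := chain_dedup (w :: l0).length (w :: l0) le_rfl hC
  have hh' : m.head? = some w := hh
  have hl' : m.getLast? = some u := by
    rw [hl, List.getLast?_eq_getLast (by simp : w :: l0 ≠ []), hlast]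
  -- consecutive pairs on m
  set onP : V → V → Prop := fun a b =>
    ∃ i : ℕ, ∃ hi : i + 1 < m.length,
      m.get ⟨i, by omega⟩ = a ∧ m.get ⟨i + 1, hi⟩ = b with honP
  have onP_unique : ∀ a b c d, onP a b → onP c d → s(a, b) = s(c, d) → (a, b) = (c, d) := by
    intro a b c d ⟨i, hi, hia, hib⟩ ⟨j, hj, hjc, hjd⟩ hs
    rcases Sym2.eq_iff.mp hs with ⟨rfl, rfl⟩ | ⟨rfl, rfl⟩
    · rfl
    · -- a = d, b = c : indices clash
      have h1 : (⟨i, by omega⟩ : Fin m.length) = ⟨j + 1, hj⟩ :=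
        (hnd.get_inj_iff).mp (by rw [hia, hjd])
      have h2 : (⟨i + 1, hi⟩ : Fin m.length) = ⟨j, by omega⟩ :=
        (hnd.get_inj_iff).mp (by rw [hib, hjc])
      have := Fin.mk.injEq .. ▸ h1
      simp only [Fin.mk.injEq] at h1 h2
      omega
  -- orientation function
  set g : Sym2 V → V × V := fun p =>
    if h : ∃ ab : V × V, onP ab.1 ab.2 ∧ s(ab.1, ab.2) = p then h.choose
    else (sym2_rep p).choose with hg
  have hg_s : ∀ p, s((g p).1, (g p).2) = p := by
    intro p
    rw [hg]
    by_cases h : ∃ ab : V × V, onP ab.1 ab.2 ∧ s(ab.1, ab.2) = p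
    · simp only [dif_pos h]; exact h.choose_spec.2
    · simp only [dif_neg h]; exact (sym2_rep p).choose_spec
  have hg_on : ∀ a b, onP a b → g s(a, b) = (a, b) := by
    intro a b hab
    have h : ∃ ab : V × V, onP ab.1 ab.2 ∧ s(ab.1, ab.2) = s(a, b) := ⟨(a, b), hab, rfl⟩
    rw [hg]
    simp only [dif_pos h]
    exact onP_unique _ _ _ _ h.choose_spec.1 hab h.choose_spec.2
  set G : SDG V := ⟨∅, N.dir ∪ N.undir.image g⟩ with hG
  have hGdir : ∀ e ∈ G.dir, e ∈ N.dir ∨ ∃ p ∈ N.undir, g p = e := by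
    intro e he
    rcases Finset.mem_union.mp he with h | h
    · exact Or.inl h
    · obtain ⟨p, hp, hpe⟩ := Finset.mem_image.mp h
      exact Or.inr ⟨p, hp, hpe⟩
  have hdirects : Directs N G := by
    refine ⟨by simp [hG], Finset.subset_union_left, ?_, ?_⟩
    · intro e he hne
      rcases hGdir e he with h | ⟨p, hp, hpe⟩
      · exact absurd h hne
      · refine ⟨?_, by simp [hG]⟩
        rw [← hpe, hg_s]; exact hp
    · intro p hp _
      have hgmem : g p ∈ G.dir :=
        Finset.mem_union_right _ (Finset.mem_image_of_mem _ hp)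
      have hgnd : g p ∉ N.dir := fun hmem =>
        hP.2.2 _ hmem (by rw [hg_s]; exact hp)
      refine ⟨g p, ⟨hgmem, hgnd, hg_s p⟩, ?_⟩
      rintro e ⟨he, hen, hes⟩
      rcases hGdir e he with h | ⟨q, _, hqe⟩
      · exact absurd h hen
      · have : q = p := by rw [← hes, ← hqe, hg_s]
        rw [← hqe, this]
  -- m is a directed chain in G
  have hcmG : m.Chain' G.dstep := by
    rw [List.Chain', List.isChain_iff_getElem] at hcm ⊢
    intro i hilen
    have hi : i + 1 < m.length := by omega
    rcases hcm i hilen with h | h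
    · exact Finset.mem_union_left _ h
    · have honp : onP (m.get ⟨i, by omega⟩) (m.get ⟨i + 1, by omega⟩) :=
        ⟨i, hi, rfl, rfl⟩
      have hmem : s(m.get ⟨i, by omega⟩, m.get ⟨i + 1, by omega⟩) ∈ N.undir := h
      have : g s(m.get ⟨i, by omega⟩, m.get ⟨i + 1, by omega⟩) =
          (m.get ⟨i, by omega⟩, m.get ⟨i + 1, by omega⟩) := hg_on _ _ honp
      exact Finset.mem_union_right _ (this ▸ Finset.mem_image_of_mem _ hmem)
  have hreach : G.dreach w u := by
    cases m with
    | nil => exact absurd hh' (by simp)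
    | cons a m' =>
      have haw : a = w := by simpa using hh'
      subst haw
      refine List.relationReflTransGen_of_exists_isChain_cons m' hcmG ?_
      have := List.getLast?_eq_getLast (by simp : a :: m' ≠ [])
      rw [this] at hl'
      exact Option.some_injective _ hl'
  exact hacy G hdirects rfl ⟨(u, w), Finset.mem_union_left _ hd, hreach⟩

theorem statement_1 {V : Type} [DecidableEq V] (N : SDG V) (hP : N.Proper)
    (hacy : N.Acyclic) (u v : V) :
    (N.sreach u v ∧ N.sreach v u) ↔ N.ureach u v := by
  constructor
  · rintro ⟨h1, h2⟩
    have key : ∀ {a : V}, N.sreach a v → N.sreach v a → N.ureach a v := by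
      intro a h
      induction h using Relation.ReflTransGen.head_induction_on with
      | refl => exact fun _ => .refl
      | head h' hcv ih =>
        intro hva
        rcases h' with hd | hu
        · exact (no_back N hP hacy hd (hcv.trans hva)).elim
        · exact Relation.ReflTransGen.head hu (ih (hva.tail (Or.inr hu)))
    exact key h1 h2
  · intro h
    have hsymm : Symmetric N.ustep := by
      intro a b hab
      show s(b, a) ∈ N.undir
      rw [Sym2.eq_swap]
      exact hab
    exact ⟨Relation.ReflTransGen.mono (fun a b => Or.inr : ∀ a b, N.ustep a b → N.sstep a b) _ _ h,
      Relation.ReflTransGen.mono (fun a b => Or.inr : ∀ a b, N.ustep a b → N.sstep a b)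
        _ _ ((@Relation.ReflTransGen.symmetric _ _ ⟨hsymm⟩).symm _ _ h)⟩

end SDG
end

section
/- Let N be a network (semidirected acyclic graph admitting a rooted partner) and F the graph induced by the undirected edges of N. Then F is a forest in which each tree corresponds to an undirected component of N and has at most one node with nonzero in-degree in N; moreover, the root components of N are exactly the trees of F with no such node, and these trees contain only tree nodes of N. -/
open Relation

namespace SDG

variable {V : Type} [DecidableEq V]

private lemma aux_getLast_mem {α : Type*} : ∀ {l : List α} {a : α}, l.getLast? = some a → a ∈ l
  | [], _, h => by simp at h
  | [x], a, h => by simp at h; simp [h]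
  | x :: y :: t, a, h => by
    rw [List.getLast?_cons_cons] at h
    exact List.mem_cons_of_mem _ (aux_getLast_mem h)

private lemma aux_head_getLast {α : Type*} {l : List α} (h : l.Nodup) (hl : 2 ≤ l.length)
    {a : α} (h1 : l.head? = some a) (h2 : l.getLast? = some a) : False := by
  match l, h, hl, h1, h2 with
  | x :: y :: t, h, _, h1, h2 =>
    rw [List.getLast?_cons_cons] at h2
    have hmem : a ∈ y :: t := aux_getLast_mem h2
    have hx : x = a := by simpa using h1
    subst hx
    exact (List.nodup_cons.mp h).1 hmem

theorem statement_2 {V : Type} [DecidableEq V] (N : SDG V) (hP : N.Proper)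
    (hN : IsNetwork N) :
    -- F is a forest
    N.undirGraph.IsAcyclic ∧
    -- the trees of F are exactly the undirected components of N
    (∀ u v : V, N.undirGraph.Reachable u v ↔ sim N u v) ∧
    -- each tree of F has at most one node with nonzero in-degree in N
    (∀ u v : V, N.undirGraph.Reachable u v → 1 ≤ N.ideg u → 1 ≤ N.ideg v → u = v) ∧
    -- the root components are exactly the trees of F without such a node
    (∀ v : V, InRootComp N v ↔ ∀ u, N.undirGraph.Reachable v u → N.ideg u = 0) ∧
    -- the trees that are root components contain only tree nodes
    (∀ v : V, InRootComp N v → N.ideg v ≤ 1) := by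
  classical
  obtain ⟨hAc, G, ⟨⟨hDir, hGAc, hHyb⟩, hGd⟩⟩ := hN
  obtain ⟨hsub_u, hsub_d, hnew_spec, horient⟩ := hDir
  -- G itself has no directed cycle
  have hGdd : Directs G G :=
    ⟨Finset.Subset.refl _, Finset.Subset.refl _, fun e he hne => absurd he hne,
      fun p hp hnp => absurd hp hnp⟩
  have notCyc : ¬ G.HasDirCycle := hGAc G hGdd hGd
  -- antisymmetry of directed reachability in G
  have antisym : ∀ a b : V, G.dreach a b → G.dreach b a → a = b := by
    intro a b hab hba
    rcases hab.cases_head with h | ⟨c, hac, hcb⟩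
    · exact h
    · exact absurd ⟨(a, c), hac, hcb.trans hba⟩ notCyc
  -- two distinct in-edges at a node give in-degree ≥ 2
  have two_in : ∀ e f : V × V, e ∈ G.dir → f ∈ G.dir → e.2 = f.2 → e ≠ f →
      2 ≤ G.ideg f.2 := by
    intro e f he hf h22 hne
    exact Finset.one_lt_card.mpr
      ⟨e, Finset.mem_filter.mpr ⟨he, h22⟩, f, Finset.mem_filter.mpr ⟨hf, rfl⟩, hne⟩
  -- the head of a newly directed edge has in-degree 1 in G
  have headNew : ∀ e : V × V, e ∈ G.dir → e ∉ N.dir → G.ideg e.2 ≤ 1 := by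
    intro e he hne
    by_contra h
    push_neg at h
    have hmem : e ∈ G.hybridEdges := Finset.mem_filter.mpr ⟨he, h⟩
    rw [hHyb] at hmem
    exact hne (Finset.mem_filter.mp hmem).1
  -- roots: nodes with no newly directed in-edge
  set Root : V → Prop := fun v => ∀ e : V × V, e ∈ G.dir → e.2 = v → e ∈ N.dir with hRootDef
  have root_of_ideg : ∀ v : V, 1 ≤ N.ideg v → Root v := by
    intro v hv e he h22
    by_contra hnew
    obtain ⟨f, hf⟩ := Finset.card_pos.mp hv
    rw [Finset.mem_filter] at hf
    have hfG : f ∈ G.dir := hsub_d hf.1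
    have hne : e ≠ f := fun h => hnew (h ▸ hf.1)
    have h2i : 2 ≤ G.ideg f.2 := two_in e f he hfG (by rw [h22, hf.2]) hne
    have h1i : G.ideg e.2 ≤ 1 := headNew e he hnew
    rw [h22, ← hf.2] at h1i
    omega
  -- every undirected edge of N is directed one way or the other in G, as a new edge
  have orient : ∀ a b : V, N.ustep a b →
      ((a, b) ∈ G.dir ∧ (a, b) ∉ N.dir) ∨ ((b, a) ∈ G.dir ∧ (b, a) ∉ N.dir) := by
    intro a b hab
    have hng : s(a, b) ∉ G.undir := by rw [hGd]; exact Finset.notMem_empty _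
    obtain ⟨e, ⟨heG, heN, heq⟩, -⟩ := horient _ hab hng
    rw [Sym2.eq_iff] at heq
    rcases heq with ⟨ha, hb⟩ | ⟨ha, hb⟩
    · left
      have he : e = (a, b) := Prod.ext ha hb
      rw [he] at heG heN; exact ⟨heG, heN⟩
    · right
      have he : e = (b, a) := Prod.ext ha hb
      rw [he] at heG heN; exact ⟨heG, heN⟩
  -- symmetry of undirected reachability
  have usymm : ∀ a b : V, N.ureach a b → N.ureach b a := by
    intro a b h
    induction h with
    | refl => exact ReflTransGen.refl
    | tail _ hstep ih =>
      refine ReflTransGen.head ?_ ih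
      show s(_, _) ∈ N.undir
      rw [Sym2.eq_swap]
      exact hstep
  -- newly directed step relation
  set nstep : V → V → Prop := fun a b => (a, b) ∈ G.dir ∧ (a, b) ∉ N.dir with hnstepDef
  have nreach_dreach : ∀ a b : V, ReflTransGen nstep a b → G.dreach a b :=
    fun a b h => show ReflTransGen G.dstep a b from ReflTransGen.mono (fun x y (hxy : nstep x y) => hxy.1) _ _ h
  -- a root reaches its whole undirected component by newly directed edges
  have FR : ∀ u w : V, Root u → N.ureach u w → ReflTransGen nstep u w := by
    intro u w hu h
    induction h with
    | refl => exact ReflTransGen.refl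
    | @tail w' w h' hstep ih =>
      rcases orient _ _ hstep with hnew | hnew
      · exact ih.tail hnew
      · rcases ih.cases_tail with heq | ⟨y, hy, hyw'⟩
        · exfalso
          rw [heq] at hnew
          exact hnew.2 (hu _ hnew.1 rfl)
        · by_cases hyw : y = w
          · rw [← hyw]; exact hy
          · exfalso
            have h2i : 2 ≤ G.ideg (w, w').2 :=
              two_in (y, w') (w, w') hyw'.1 hnew.1 rfl
                (by simp [Prod.ext_iff, hyw])
            have h1i : G.ideg (w, w').2 ≤ 1 := headNew (w, w') hnew.1 hnew.2
            omega
  -- semidirected reachability from a root factors through roots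
  have MM : ∀ a b : V, Root a → N.sreach a b →
      ∃ y : V, G.dreach a y ∧ Root y ∧ N.ureach y b := by
    intro a b ha h
    induction h with
    | refl => exact ⟨a, ReflTransGen.refl, ha, ReflTransGen.refl⟩
    | @tail b b' h' hstep ih =>
      obtain ⟨y, hay, hy, hyb⟩ := ih
      rcases hstep with hd | hu
      · have hb' : Root b' :=
          root_of_ideg b' (Finset.card_pos.mpr ⟨(b, b'), Finset.mem_filter.mpr ⟨hd, rfl⟩⟩)
        refine ⟨b', ?_, hb', ReflTransGen.refl⟩
        exact (hay.trans (nreach_dreach _ _ (FR _ _ hy hyb))).tail (hsub_d hd)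
      · exact ⟨y, hay, hy, hyb.tail hu⟩
  -- last directed edge extraction
  have LL : ∀ u v : V, N.sreach u v → N.ureach u v ∨
      ∃ x y : V, N.sreach u x ∧ (x, y) ∈ N.dir ∧ N.ureach y v := by
    intro u v h
    induction h with
    | refl => exact Or.inl ReflTransGen.refl
    | @tail v v' h' hstep ih =>
      rcases hstep with hd | hu
      · exact Or.inr ⟨v, v', h', hd, ReflTransGen.refl⟩
      · rcases ih with h | ⟨x, y, h1, h2, h3⟩
        · exact Or.inl (h.tail hu)
        · exact Or.inr ⟨x, y, h1, h2, h3.tail hu⟩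
  -- mutual semidirected reachability implies undirected reachability
  have HH : ∀ u v : V, N.sreach u v → N.sreach v u → N.ureach u v := by
    intro u v huv hvu
    rcases LL u v huv with h | ⟨x, y, hux, hxy, hyv⟩
    · exact h
    · exfalso
      have hry : Root y :=
        root_of_ideg y (Finset.card_pos.mpr ⟨(x, y), Finset.mem_filter.mpr ⟨hxy, rfl⟩⟩)
      have hsyx : N.sreach y x :=
        ((ReflTransGen.mono (fun a b h => Or.inr h) _ _ hyv).trans hvu).trans hux
      obtain ⟨z, hyz, hz, hzx⟩ := MM y x hry hsyx
      have hyx : G.dreach y x := hyz.trans (nreach_dreach _ _ (FR z x hz hzx))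
      exact notCyc ⟨(x, y), hsub_d hxy, hyx⟩
  -- adjacency in the undirected graph vs ustep
  have adj_ustep : ∀ a b : V, N.undirGraph.Adj a b ↔ N.ustep a b := by
    intro a b
    constructor
    · intro h
      exact ((SimpleGraph.fromEdgeSet_adj _).mp h).1
    · intro h
      refine (SimpleGraph.fromEdgeSet_adj _).mpr ⟨h, ?_⟩
      intro hab
      exact hP.1 _ h (Sym2.mk_isDiag_iff.mpr hab)
  have reach_iff_ureach : ∀ a b : V, N.undirGraph.Reachable a b ↔ N.ureach a b := by
    intro a b
    constructor
    · intro h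
      obtain ⟨p⟩ := h
      induction p with
      | nil => exact ReflTransGen.refl
      | cons h p ih => exact ReflTransGen.head ((adj_ustep _ _).mp h) ih
    · intro h
      induction h with
      | refl => exact SimpleGraph.Reachable.refl _
      | tail _ hstep ih => exact ih.trans ((adj_ustep _ _).mpr hstep).reachable
  -- maximal element with respect to G-reachability
  have exists_max : ∀ s : Finset V, s.Nonempty →
      ∃ u ∈ s, ∀ w ∈ s, G.dreach u w → u = w := by
    intro s
    induction s using Finset.cons_induction with
    | empty => rintro ⟨x, hx⟩; exact absurd hx (Finset.notMem_empty x)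
    | cons a s ha ih =>
      intro _
      rcases s.eq_empty_or_nonempty with rfl | hs
      · refine ⟨a, Finset.mem_cons_self _ _, ?_⟩
        intro w hw _
        exact ((Finset.mem_cons.mp hw).resolve_right (by simp)).symm
      · obtain ⟨u, hu, hmax⟩ := ih hs
        by_cases hua : G.dreach u a
        · refine ⟨a, Finset.mem_cons_self _ _, ?_⟩
          intro w hw haw
          rcases Finset.mem_cons.mp hw with rfl | hw
          · rfl
          · cases hmax w hw (hua.trans haw)
            exact antisym a u haw hua
        · refine ⟨u, Finset.mem_cons.mpr (Or.inr hu), ?_⟩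
          intro w hw huw
          rcases Finset.mem_cons.mp hw with rfl | hw
          · exact absurd huw hua
          · exact hmax w hw huw
  -- Claim 1: the undirected graph is a forest
  have claim1 : N.undirGraph.IsAcyclic := by
    intro v c hc
    have hvs : v ∈ c.support := SimpleGraph.Walk.start_mem_support c
    obtain ⟨u, hu, hmax⟩ :=
      exists_max c.support.toFinset ⟨v, List.mem_toFinset.mpr hvs⟩
    have hu' : u ∈ c.support := List.mem_toFinset.mp hu
    set d := c.rotate u hu' with hd
    have hdc : d.IsCycle := hc.rotate hu'
    have hdsup : ∀ x : V, x ∈ d.support → x ∈ c.support := by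
      intro x hx
      rw [SimpleGraph.Walk.support_eq_cons d] at hx
      rcases List.mem_cons.mp hx with rfl | hx
      · exact hu'
      · have hperm := SimpleGraph.Walk.support_rotate c u hu'
        have : x ∈ c.support.tail := hperm.mem_iff.mp hx
        rw [SimpleGraph.Walk.support_eq_cons c]
        exact List.mem_cons_of_mem _ this
    -- any nontrivial closed walk at u inside c has its first edge directed into u
    have main : ∀ e : N.undirGraph.Walk u u, e ≠ SimpleGraph.Walk.nil →
        (∀ x : V, x ∈ e.support → x ∈ c.support) →
        ∃ w : V, (w, u) ∈ G.dir ∧ (w, u) ∉ N.dir ∧ e.edges.head? = some s(u, w) := by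
      intro e hne hsup
      cases e with
      | nil => exact absurd rfl hne
      | @cons _ w _ hadj q =>
        have hw : w ∈ c.support := by
          apply hsup
          rw [SimpleGraph.Walk.support_cons]
          exact List.mem_cons_of_mem _ (SimpleGraph.Walk.start_mem_support q)
        rcases orient u w ((adj_ustep u w).mp hadj) with hnew | hnew
        · exfalso
          have : u = w := hmax w (List.mem_toFinset.mpr hw) (ReflTransGen.single hnew.1)
          exact hadj.ne this
        · exact ⟨w, hnew.1, hnew.2, by simp⟩
    have hdne : d ≠ SimpleGraph.Walk.nil := hdc.isCircuit.ne_nil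
    have hdrne : d.reverse ≠ SimpleGraph.Walk.nil := by
      intro h
      have h3 := hdc.three_le_length
      have : d.length = 0 := by
        rw [← SimpleGraph.Walk.length_reverse, h]
        rfl
      omega
    obtain ⟨w, hwG, hwN, hhead⟩ := main d hdne hdsup
    obtain ⟨w', hwG', hwN', hhead'⟩ := main d.reverse hdrne (by
      intro x hx
      apply hdsup
      rwa [SimpleGraph.Walk.support_reverse, List.mem_reverse] at hx)
    by_cases hww : w = w'
    · subst hww
      rw [SimpleGraph.Walk.edges_reverse, List.head?_reverse] at hhead'
      exact aux_head_getLast hdc.edges_nodup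
        (by rw [SimpleGraph.Walk.length_edges]; have := hdc.three_le_length; omega) hhead hhead'
    · have h2i : 2 ≤ G.ideg (w', u).2 :=
        two_in (w, u) (w', u) hwG hwG' rfl (by simp [Prod.ext_iff, hww])
      have h1i : G.ideg (w', u).2 ≤ 1 := headNew (w', u) hwG' hwN'
      omega
  -- Claim 2
  have claim2 : ∀ u v : V, N.undirGraph.Reachable u v ↔ sim N u v := by
    intro u v
    constructor
    · intro h
      have hu := (reach_iff_ureach u v).mp h
      exact ⟨ReflTransGen.mono (fun a b h => Or.inr h) _ _ hu, ReflTransGen.mono (fun a b h => Or.inr h) _ _ (usymm _ _ hu)⟩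
    · intro ⟨h1, h2⟩
      exact (reach_iff_ureach u v).mpr (HH u v h1 h2)
  -- Claim 3
  have claim3 : ∀ u v : V, N.undirGraph.Reachable u v → 1 ≤ N.ideg u → 1 ≤ N.ideg v →
      u = v := by
    intro u v hr hiu hiv
    have hur := (reach_iff_ureach u v).mp hr
    have h1 := nreach_dreach _ _ (FR u v (root_of_ideg u hiu) hur)
    have h2 := nreach_dreach _ _ (FR v u (root_of_ideg v hiv) (usymm _ _ hur))
    exact antisym u v h1 h2
  -- Claim 4
  have claim4 : ∀ v : V, InRootComp N v ↔
      ∀ u : V, N.undirGraph.Reachable v u → N.ideg u = 0 := by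
    intro v
    constructor
    · intro hv u hru
      by_contra hne
      have hpos : 1 ≤ N.ideg u := Nat.one_le_iff_ne_zero.mpr hne
      obtain ⟨f, hf⟩ := Finset.card_pos.mp hpos
      rw [Finset.mem_filter] at hf
      have hfe : (f.1, u) ∈ N.dir := by
        have : f = (f.1, u) := Prod.ext rfl hf.2
        rw [← this]; exact hf.1
      have hvu : N.ureach v u := (reach_iff_ureach v u).mp hru
      -- sreach f.1 v
      have hs1 : N.sreach f.1 v :=
        ReflTransGen.head (Or.inl hfe) (ReflTransGen.mono (fun a b h => Or.inr h) _ _ (usymm _ _ hvu))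
      have hs2 : N.sreach v f.1 := hv f.1 hs1
      have huf : N.ureach u f.1 :=
        (usymm _ _ hvu).trans (HH v f.1 hs2 hs1)
      have hdr : G.dreach u f.1 :=
        nreach_dreach _ _ (FR u f.1 (root_of_ideg u hpos) huf)
      exact notCyc ⟨(f.1, u), hsub_d hfe, hdr⟩
    · intro hv u hsuv
      rcases LL u v hsuv with h | ⟨x, y, _, hxy, hyv⟩
      · exact ReflTransGen.mono (fun a b h => Or.inr h) _ _ (usymm _ _ h)
      · exfalso
        have h0 : N.ideg y = 0 :=
          hv y ((reach_iff_ureach v y).mpr (usymm _ _ hyv))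
        have : (x, y) ∈ N.dir.filter fun e => e.2 = y := Finset.mem_filter.mpr ⟨hxy, rfl⟩
        have := Finset.card_pos.mpr ⟨(x, y), this⟩
        unfold SDG.ideg at h0
        omega
  -- Claim 5
  have claim5 : ∀ v : V, InRootComp N v → N.ideg v ≤ 1 := by
    intro v hv
    have := (claim4 v).mp hv v (SimpleGraph.Reachable.refl v)
    omega
  exact ⟨claim1, claim2, claim3, claim4, claim5⟩

end SDG
end

section
/- Let N be a network and N' the semidirected graph obtained from N by undirecting some set of tree edges of N. Then N' is a network, and N is phylogenetically compatible with N'. -/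
open Relation

namespace SDG

variable {V : Type} [DecidableEq V]

private lemma directs_self (G : SDG V) : Directs G G :=
  ⟨subset_rfl, subset_rfl, fun e he hne => absurd he hne, fun p hp hnp => absurd hp hnp⟩

private lemma two_le_ideg (G : SDG V) {p q x : V}
    (hpq : p ≠ q) (hp : (p, x) ∈ G.dir) (hq : (q, x) ∈ G.dir) : 2 ≤ G.ideg x := by
  have hsub : ({(p, x), (q, x)} : Finset (V × V)) ⊆ G.dir.filter fun e => e.2 = x := by
    intro e he
    rcases Finset.mem_insert.1 he with rfl | he
    · exact Finset.mem_filter.2 ⟨hp, rfl⟩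
    · rcases Finset.mem_singleton.1 he with rfl
      exact Finset.mem_filter.2 ⟨hq, rfl⟩
  have hcard : ({(p, x), (q, x)} : Finset (V × V)).card = 2 :=
    Finset.card_pair (by simp [hpq])
  calc 2 = _ := hcard.symm
    _ ≤ _ := Finset.card_le_card hsub

private lemma mixed_acyclic (G H : SDG V)
    (hGnc : ¬ G.HasDirCycle)
    (hne : ∀ a b : V, (a, b) ∈ H.dir → a ≠ b)
    (h1 : ∀ a b : V, (a, b) ∈ H.dir → (b, a) ∈ H.dir → False)
    (hL1 : ∀ a b : V, (a, b) ∈ H.dir → (a, b) ∈ G.dir ∨ ((b, a) ∈ G.dir ∧ G.ideg a ≤ 1)) :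
    ¬ H.HasDirCycle := by
  rintro ⟨⟨x, y⟩, heH, hreach⟩
  -- transition lemma: after a forward step, all steps are forward
  have hT : ∀ p z q : V, (p, z) ∈ H.dir → (p, z) ∈ G.dir → (z, q) ∈ H.dir →
      (z, q) ∈ G.dir := by
    intro p z q hpzH hpzG hzqH
    by_contra hzqG
    rcases hL1 z q hzqH with h | ⟨hqz, hdeg⟩
    · exact hzqG h
    by_cases hpq : p = q
    · subst hpq; exact h1 p z hpzH hzqH
    · have := two_le_ideg G hpq hpzG hqz
      omega
  -- decomposition of a walk: a backward phase followed by a forward phase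
  have hL6 : ∀ u v : V, ReflTransGen H.dstep u v →
      ReflTransGen (fun a b => (a, b) ∈ H.dir ∧ (a, b) ∉ G.dir) u v ∨
        ∃ m w, ReflTransGen (fun a b => (a, b) ∈ H.dir ∧ (a, b) ∉ G.dir) u m ∧
          ReflTransGen (fun a b => (a, b) ∈ H.dir ∧ (a, b) ∈ G.dir) m w ∧
          ((w, v) ∈ H.dir ∧ (w, v) ∈ G.dir) := by
    intro u v h
    induction h with
    | refl => exact Or.inl .refl
    | @tail b c hub hbc ih =>
      have hbcH : (b, c) ∈ H.dir := hbc
      by_cases hg : (b, c) ∈ G.dir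
      · rcases ih with hB | ⟨m, w, hB, hF, hw⟩
        · exact Or.inr ⟨b, b, hB, .refl, hbcH, hg⟩
        · exact Or.inr ⟨m, b, hB, hF.tail hw, hbcH, hg⟩
      · rcases ih with hB | ⟨m, w, hB, hF, hw⟩
        · exact Or.inl (hB.tail ⟨hbcH, hg⟩)
        · exact absurd (hT w b c hw.1 hw.2 hbcH) hg
  have hL7 : ∀ u v : V, ReflTransGen (fun a b => (a, b) ∈ H.dir ∧ (a, b) ∉ G.dir) u v →
      G.dreach v u := by
    intro u v h
    induction h with
    | refl => exact .refl
    | @tail b c hub hbc ih =>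
      rcases hL1 b c hbc.1 with h' | ⟨hcb, _⟩
      · exact absurd h' hbc.2
      · exact ReflTransGen.head hcb ih
  have hL7' : ∀ u v : V, ReflTransGen (fun a b => (a, b) ∈ H.dir ∧ (a, b) ∈ G.dir) u v →
      G.dreach u v := fun u v h => by
    induction h with
    | refl => exact .refl
    | tail _ hbc ih => exact ReflTransGen.tail ih hbc.2
  have hxy : x ≠ y := hne x y heH
  have hreach' : ReflTransGen H.dstep y x := hreach
  by_cases hg : (x, y) ∈ G.dir
  · rcases hL6 y x hreach' with hB | ⟨m, w, hB, hF, hw⟩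
    · rcases hB.cases_head with h | ⟨z, hz, _⟩
      · exact hxy h.symm
      · exact hz.2 (hT x y z heH hg hz.1)
    · rcases hB.cases_head with h | ⟨z, hz, _⟩
      · subst h
        have hr : G.dreach y x := (hL7' _ _ hF).tail hw.2
        exact hGnc ⟨(x, y), hg, hr⟩
      · exact hz.2 (hT x y z heH hg hz.1)
  · rcases hL1 x y heH with h | ⟨hyx, hdeg⟩
    · exact hg h
    rcases hL6 y x hreach' with hB | ⟨m, w, hB, hF, hw⟩
    · exact hGnc ⟨(y, x), hyx, hL7 _ _ hB⟩
    · by_cases hwy : w = y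
      · subst hwy; exact h1 x w heH hw.1
      · have := two_le_ideg G hwy hw.2 hyx
        omega

theorem statement_3 {V : Type} [DecidableEq V] (N : SDG V) (hP : N.Proper)
    (hN : IsNetwork N) (A : Finset (V × V)) (hA : A ⊆ N.dir)
    (hAtree : ∀ e ∈ A, e ∉ N.hybridEdges) :
    IsNetwork ⟨N.undir ∪ A.image (fun e => s(e.1, e.2)), N.dir \ A⟩ ∧
      PhyloCompat N ⟨N.undir ∪ A.image (fun e => s(e.1, e.2)), N.dir \ A⟩ := by
  obtain ⟨hNA, G, ⟨hDNG, hGA, hGh⟩, hGd⟩ := hN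
  have hGd' : G.undir = ∅ := hGd
  have hGnc : ¬ G.HasDirCycle := hGA G (directs_self G) hGd
  have h2c : ∀ a b : V, (a, b) ∈ N.dir → (b, a) ∈ N.dir → False := by
    intro a b hab hba
    exact hGnc ⟨(a, b), hDNG.2.1 hab, ReflTransGen.single (hDNG.2.1 hba)⟩
  set N' : SDG V := ⟨N.undir ∪ A.image (fun e => s(e.1, e.2)), N.dir \ A⟩ with hN'def
  have hN'u : N'.undir = N.undir ∪ A.image (fun e => s(e.1, e.2)) := rfl
  have hN'd : N'.dir = N.dir \ A := rfl
  have hmemA : ∀ a b : V, s(a, b) ∈ A.image (fun e => s(e.1, e.2)) ↔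
      ((a, b) ∈ A ∨ (b, a) ∈ A) := by
    intro a b
    constructor
    · intro h
      obtain ⟨⟨c, d⟩, hcd, hs⟩ := Finset.mem_image.1 h
      rcases Sym2.eq_iff.1 hs with ⟨h1, h2⟩ | ⟨h1, h2⟩
      · subst h1; subst h2; exact Or.inl hcd
      · subst h1; subst h2; exact Or.inr hcd
    · rintro (h | h)
      · exact Finset.mem_image.2 ⟨(a, b), h, rfl⟩
      · exact Finset.mem_image.2 ⟨(b, a), h, Sym2.eq_swap⟩
  -- Directs N' N
  have hdirNN' : Directs N' N := by
    rw [Directs, hN'u, hN'd]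
    refine ⟨Finset.subset_union_left, Finset.sdiff_subset, ?_, ?_⟩
    · intro e he hne
      have heA : e ∈ A := by
        by_contra h
        exact hne (Finset.mem_sdiff.2 ⟨he, h⟩)
      exact ⟨Finset.mem_union_right _ (Finset.mem_image.2 ⟨e, heA, rfl⟩), hP.2.2 e he⟩
    · intro p hp hnp
      rcases Finset.mem_union.1 hp with h | h
      · exact absurd h hnp
      obtain ⟨⟨a, b⟩, hab, rfl⟩ := Finset.mem_image.1 h
      refine ⟨(a, b), ⟨hA hab, fun hmem => (Finset.mem_sdiff.1 hmem).2 hab, rfl⟩, ?_⟩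
      rintro ⟨c, d⟩ ⟨hcd, hcd', hs⟩
      rcases Sym2.eq_iff.1 hs with ⟨h1, h2⟩ | ⟨h1, h2⟩
      · subst h1; subst h2; rfl
      · subst h1; subst h2
        exact absurd hcd (fun hcd => h2c _ _ (hA hab) hcd)
  -- hybrid edge bookkeeping
  have hhybA : ∀ a b : V, (a, b) ∈ A → ¬ 2 ≤ N.ideg b := by
    intro a b hab h2
    exact hAtree _ hab (Finset.mem_filter.2 ⟨hA hab, h2⟩)
  have hidegle : ∀ v, N'.ideg v ≤ N.ideg v := by
    intro v
    apply Finset.card_le_card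
    rw [hN'd]
    exact Finset.filter_subset_filter _ Finset.sdiff_subset
  have hidegeq : ∀ v, 2 ≤ N.ideg v → N'.ideg v = N.ideg v := by
    intro v h2
    unfold ideg
    rw [hN'd]
    congr 1
    apply Finset.Subset.antisymm (Finset.filter_subset_filter _ Finset.sdiff_subset)
    intro e he
    obtain ⟨heN, hev⟩ := Finset.mem_filter.1 he
    refine Finset.mem_filter.2 ⟨Finset.mem_sdiff.2 ⟨heN, ?_⟩, hev⟩
    intro heA
    exact hhybA e.1 e.2 (by simpa using heA) (by rw [hev]; exact h2)
  have hhyb : N.hybridEdges = N'.hybridEdges := by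
    apply Finset.Subset.antisymm
    · intro e he
      obtain ⟨heN, h2⟩ := Finset.mem_filter.1 he
      have heA : e ∉ A := fun h => hhybA e.1 e.2 (by simpa using h) h2
      refine Finset.mem_filter.2 ⟨?_, by rw [hidegeq _ h2]; exact h2⟩
      rw [hN'd]; exact Finset.mem_sdiff.2 ⟨heN, heA⟩
    · intro e he
      obtain ⟨heN', h2⟩ := Finset.mem_filter.1 he
      have hle := hidegle e.2
      rw [hN'd] at heN'
      exact Finset.mem_filter.2 ⟨(Finset.mem_sdiff.1 heN').1, by omega⟩
  -- Directs N' G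
  have hdirN'G : Directs N' G := by
    refine ⟨by rw [hGd']; exact Finset.empty_subset _,
      fun e he => hDNG.2.1 (Finset.mem_sdiff.1 (hN'd ▸ he)).1, ?_, ?_⟩
    · intro e he hne
      rw [hN'd] at hne
      refine ⟨?_, by rw [hGd']; exact Finset.notMem_empty _⟩
      rw [hN'u]
      by_cases h : e ∈ N.dir
      · have heA : e ∈ A := by
          by_contra h'
          exact hne (Finset.mem_sdiff.2 ⟨h, h'⟩)
        exact Finset.mem_union_right _ (Finset.mem_image.2 ⟨e, heA, rfl⟩)
      · exact Finset.mem_union_left _ (hDNG.2.2.1 e he h).1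
    · intro p hp hnp
      rw [hN'u] at hp
      by_cases hpN : p ∈ N.undir
      · obtain ⟨e, ⟨heG, heN, hse⟩, huniq⟩ :=
          hDNG.2.2.2 p hpN (by rw [hGd']; exact Finset.notMem_empty _)
        refine ⟨e, ⟨heG, fun h => heN (Finset.mem_sdiff.1 (hN'd ▸ h)).1, hse⟩, ?_⟩
        rintro e' ⟨he'G, he'N', hse'⟩
        by_cases h : e' ∈ N.dir
        · have hmem : s(e'.1, e'.2) ∈ N.undir := by rw [hse']; exact hpN
          exact (hP.2.2 e' h hmem).elim
        · exact huniq e' ⟨he'G, h, hse'⟩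
      · rcases Finset.mem_union.1 hp with h | h
        · exact absurd h hpN
        obtain ⟨⟨a, b⟩, habA, rfl⟩ := Finset.mem_image.1 h
        have habG : (a, b) ∈ G.dir := hDNG.2.1 (hA habA)
        refine ⟨(a, b), ⟨habG, fun h' => (Finset.mem_sdiff.1 (hN'd ▸ h')).2 habA, rfl⟩, ?_⟩
        rintro ⟨c, d⟩ ⟨hcdG, hcdN', hse⟩
        rcases Sym2.eq_iff.1 hse with ⟨h1, h2⟩ | ⟨h1, h2⟩
        · exact Prod.ext h1 h2
        · have hba : (b, a) ∈ G.dir := by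
            have hcd : (c, d) = (b, a) := Prod.ext h1 h2
            rw [← hcd]; exact hcdG
          exact (hGnc ⟨(a, b), habG, ReflTransGen.single hba⟩).elim
  -- Acyclicity of N'
  have hN'Acyclic : N'.Acyclic := by
    intro H hDH hHd
    have hHd' : H.undir = ∅ := hHd
    have hneH : ∀ a b : V, (a, b) ∈ H.dir → a ≠ b := by
      intro a b hab hab'
      subst hab'
      by_cases h : (a, a) ∈ N'.dir
      · exact hP.2.1 _ (Finset.mem_sdiff.1 (hN'd ▸ h)).1 rfl
      · have hs := (hDH.2.2.1 (a, a) hab h).1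
        rw [hN'u] at hs
        rcases Finset.mem_union.1 hs with h' | h'
        · exact hP.1 _ h' (Sym2.mk_isDiag_iff.2 rfl)
        · rcases (hmemA a a).1 h' with h'' | h''
          · exact hP.2.1 _ (hA h'') rfl
          · exact hP.2.1 _ (hA h'') rfl
    have h1H : ∀ a b : V, (a, b) ∈ H.dir → (b, a) ∈ H.dir → False := by
      intro a b hab hba
      have hab' : a ≠ b := hneH a b hab
      by_cases h : (a, b) ∈ N'.dir
      · by_cases h' : (b, a) ∈ N'.dir
        · exact h2c a b (Finset.mem_sdiff.1 (hN'd ▸ h)).1 (Finset.mem_sdiff.1 (hN'd ▸ h')).1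
        · have habN : (a, b) ∈ N.dir := (Finset.mem_sdiff.1 (hN'd ▸ h)).1
          have hs := (hDH.2.2.1 (b, a) hba h').1
          rw [hN'u] at hs
          rcases Finset.mem_union.1 hs with hu | hu
          · exact hP.2.2 (a, b) habN (Sym2.eq_swap ▸ hu)
          · rcases (hmemA b a).1 hu with hA' | hA'
            · exact h2c a b habN (hA hA')
            · exact (Finset.mem_sdiff.1 (hN'd ▸ h)).2 hA'
      · by_cases h' : (b, a) ∈ N'.dir
        · have hbaN : (b, a) ∈ N.dir := (Finset.mem_sdiff.1 (hN'd ▸ h')).1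
          have hs := (hDH.2.2.1 (a, b) hab h).1
          rw [hN'u] at hs
          rcases Finset.mem_union.1 hs with hu | hu
          · exact hP.2.2 (b, a) hbaN (Sym2.eq_swap ▸ hu)
          · rcases (hmemA a b).1 hu with hA' | hA'
            · exact h2c b a hbaN (hA hA')
            · exact (Finset.mem_sdiff.1 (hN'd ▸ h')).2 hA'
        · have hs := (hDH.2.2.1 (a, b) hab h).1
          obtain ⟨e, he, huniq⟩ :=
            hDH.2.2.2 s(a, b) hs (by rw [hHd']; exact Finset.notMem_empty _)
          have e1 := huniq (a, b) ⟨hab, h, rfl⟩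
          have e2 := huniq (b, a) ⟨hba, h', Sym2.eq_swap⟩
          exact hab' (Prod.ext_iff.1 (e1.trans e2.symm)).1
    have hL1H : ∀ a b : V, (a, b) ∈ H.dir →
        (a, b) ∈ G.dir ∨ ((b, a) ∈ G.dir ∧ G.ideg a ≤ 1) := by
      intro a b hab
      by_cases hg : (a, b) ∈ G.dir
      · exact Or.inl hg
      right
      have hnotN' : (a, b) ∉ N'.dir := fun h =>
        hg (hDNG.2.1 (Finset.mem_sdiff.1 (hN'd ▸ h)).1)
      have hs := (hDH.2.2.1 (a, b) hab hnotN').1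
      rw [hN'u] at hs
      have hba : (b, a) ∈ G.dir := by
        rcases Finset.mem_union.1 hs with hu | hu
        · obtain ⟨e, ⟨heG, heN, hse⟩, _⟩ :=
            hDNG.2.2.2 _ hu (by rw [hGd']; exact Finset.notMem_empty _)
          rcases Sym2.eq_iff.1 hse with ⟨h1, h2⟩ | ⟨h1, h2⟩
          · have he : e = (a, b) := Prod.ext h1 h2
            exact absurd (he ▸ heG) hg
          · have he : e = (b, a) := Prod.ext h1 h2
            exact he ▸ heG
        · rcases (hmemA a b).1 hu with hA' | hA'
          · exact absurd (hDNG.2.1 (hA hA')) hg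
          · exact hDNG.2.1 (hA hA')
      refine ⟨hba, ?_⟩
      by_contra hdeg
      push_neg at hdeg
      have hhyb' : (b, a) ∈ G.hybridEdges :=
        Finset.mem_filter.2 ⟨hba, show 2 ≤ G.ideg a by omega⟩
      rw [hGh] at hhyb'
      have hbaN : (b, a) ∈ N.dir := (Finset.mem_filter.1 hhyb').1
      have hbaA : (b, a) ∉ A := fun hmem => hAtree _ hmem hhyb'
      have hbaN' : (b, a) ∈ N'.dir := by
        rw [hN'd]; exact Finset.mem_sdiff.2 ⟨hbaN, hbaA⟩
      exact h1H a b hab (hDH.2.1 hbaN')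
    exact mixed_acyclic G H hGnc hneH h1H hL1H
  exact ⟨⟨hN'Acyclic, G, ⟨hdirN'G, hGA, hGh.trans hhyb⟩, hGd⟩, hdirNN', hNA, hhyb⟩

end SDG
end

section
/- Let N be a network, G a rooted partner of N, and v a node in a root component of N. If there is a directed path from v to u in G, then u lies in a root component of N. -/
open Relation

namespace SDG

variable {V : Type} [DecidableEq V]

theorem statement_4 {V : Type} [DecidableEq V] (N G : SDG V) (hP : N.Proper)
    (hN : IsNetwork N) (hG : RootedPartner G N) (u v : V)
    (hv : InRootComp N v) (hpath : G.dreach u v) :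
    InRootComp N u := by
  have hdir : Directs N G := hG.1.1
  have huv : N.sreach u v := by
    refine ReflTransGen.mono ?_ u v hpath
    intro a b h
    by_cases hab : (a, b) ∈ N.dir
    · exact Or.inl hab
    · exact Or.inr ((hdir.2.2.1 (a, b) h hab).1)
  intro w hwu
  exact huv.trans (hv w (hwu.trans huv))

end SDG
end

section
/- Let N be a network and G1, G2 two rooted partners of N. Then every edge of N that does not belong to a root component of N has the same direction in G1 and in G2. -/
open Relation

namespace SDG

variable {V : Type} [DecidableEq V]

section Aux

variable {N G G' : SDG V}

lemma aux_ustep_symm {a b : V} (h : N.ustep a b) : N.ustep b a := by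
  unfold ustep at *; rwa [Sym2.eq_swap]

lemma aux_ne_of_undir (hP : N.Proper) {a b : V} (h : s(a, b) ∈ N.undir) : a ≠ b := by
  intro hab
  exact hP.1 _ h (Sym2.mk_isDiag_iff.mpr hab)

lemma aux_undir_not_dir (hP : N.Proper) {a b : V} (h : s(a, b) ∈ N.undir) :
    (a, b) ∉ N.dir := by
  intro hd
  exact hP.2.2 _ hd h

/-- Exactly one direction of an undirected edge of `N` appears in a rooted partner. -/
lemma aux_exactly_one (hP : N.Proper) (hG : RootedPartner G N) {a b : V}
    (hab : s(a, b) ∈ N.undir) :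
    ((a, b) ∈ G.dir ∧ (b, a) ∉ G.dir ∧ (a, b) ∉ N.dir) ∨
      ((b, a) ∈ G.dir ∧ (a, b) ∉ G.dir ∧ (b, a) ∉ N.dir) := by
  have hne : a ≠ b := aux_ne_of_undir hP hab
  have hNab : (a, b) ∉ N.dir := aux_undir_not_dir hP hab
  have hNba : (b, a) ∉ N.dir := aux_undir_not_dir hP (by rwa [Sym2.eq_swap])
  have hdir : G.undir = ∅ := hG.2
  have hp : s(a, b) ∉ G.undir := by simp [hdir]
  obtain ⟨e, ⟨heG, heN, hes⟩, huniq⟩ := hG.1.1.2.2.2 _ hab hp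
  have he : e = (a, b) ∨ e = (b, a) := by
    rcases Sym2.eq_iff.mp hes with ⟨h1, h2⟩ | ⟨h1, h2⟩
    · left; exact Prod.ext h1 h2
    · right; exact Prod.ext h1 h2
  rcases he with rfl | rfl
  · left
    refine ⟨heG, ?_, hNab⟩
    intro hba
    have := huniq (b, a) ⟨hba, hNba, by rw [Sym2.eq_swap]⟩
    exact hne (Prod.ext_iff.mp this).1.symm
  · right
    refine ⟨heG, ?_, hNba⟩
    intro hab'
    have := huniq (a, b) ⟨hab', hNab, rfl⟩
    exact hne (Prod.ext_iff.mp this).1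

/-- The head of a newly directed edge has a unique in-edge in the partner. -/
lemma aux_new_head_unique (hG : RootedPartner G N) {a b : V}
    (h : (a, b) ∈ G.dir) (hn : (a, b) ∉ N.dir) :
    ∀ c, (c, b) ∈ G.dir → c = a := by
  intro c hc
  by_contra hca
  have h2 : 2 ≤ G.ideg b := by
    rw [ideg]
    exact Finset.one_lt_card.mpr ⟨(a, b), Finset.mem_filter.mpr ⟨h, rfl⟩,
      (c, b), Finset.mem_filter.mpr ⟨hc, rfl⟩,
      by simp [Ne, Prod.ext_iff]; intro h'; exact hca h'.symm⟩
  have hhyb : (a, b) ∈ G.hybridEdges := Finset.mem_filter.mpr ⟨h, h2⟩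
  rw [hG.1.2.2] at hhyb
  exact hn ((Finset.mem_filter.mp hhyb).1)

/-- The head of a newly directed edge has no `N`-directed in-edge. -/
lemma aux_new_head_no_ndir (hG : RootedPartner G N) {a b : V}
    (h : (a, b) ∈ G.dir) (hn : (a, b) ∉ N.dir) :
    ∀ c, (c, b) ∉ N.dir := by
  intro c hc
  have : c = a := aux_new_head_unique hG h hn c (hG.1.1.2.1 hc)
  exact hn (this ▸ hc)

/-- A newly directed edge comes from an undirected edge of `N`. -/
lemma aux_new_undir (hG : RootedPartner G N) {a b : V}
    (h : (a, b) ∈ G.dir) (hn : (a, b) ∉ N.dir) : s(a, b) ∈ N.undir :=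
  (hG.1.1.2.2.1 (a, b) h hn).1

/-- From a node with no new in-edge, undirected reachability implies reachability
along newly directed edges of the partner. -/
lemma aux_ureach_newreach (hP : N.Proper) (hG : RootedPartner G N) {s : V}
    (hs : ∀ c, (c, s) ∈ G.dir → (c, s) ∈ N.dir) :
    ∀ b, N.ureach s b →
      ReflTransGen (fun x y => (x, y) ∈ G.dir ∧ (x, y) ∉ N.dir) s b := by
  intro b hb
  induction hb with
  | refl => exact ReflTransGen.refl
  | tail hsb hstep ih =>
    rename_i b c
    have hbc : s(b, c) ∈ N.undir := hstep
    rcases aux_exactly_one hP hG hbc with ⟨h1, _, h3⟩ | ⟨h1, _, h3⟩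
    · exact ih.tail ⟨h1, h3⟩
    · -- (c, b) ∈ G.dir is a new in-edge of b
      rcases ih.cases_tail with rfl | ⟨x, hx, hxb⟩
      · exact absurd (hs c h1) h3
      · have : x = c := aux_new_head_unique hG h1 h3 x hxb.1
        exact this ▸ hx

/-- Two nodes without new in-edges connected by undirected edges coincide,
provided the second has no new in-edge at all. -/
lemma aux_source_unique (hP : N.Proper) (hG : RootedPartner G N) {s y : V}
    (hs : ∀ c, (c, s) ∈ G.dir → (c, s) ∈ N.dir)
    (hy : ∀ c, (c, y) ∈ G.dir → (c, y) ∈ N.dir)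
    (hr : N.ureach s y) : s = y := by
  have := aux_ureach_newreach hP hG hs y hr
  rcases this.cases_tail with rfl | ⟨x, _, hxy⟩
  · rfl
  · exact absurd (hy x hxy.1) hxy.2

lemma aux_partner_no_cycle (hG : RootedPartner G N) : ¬ G.HasDirCycle :=
  hG.1.2.1 G ⟨Finset.Subset.refl _, Finset.Subset.refl _,
    fun e he hne => absurd he hne, fun p hp hnp => absurd hp hnp⟩ hG.2

open Classical in
/-- measure for strong induction: number of ancestors within the edge support -/
noncomputable def auxm (G : SDG V) (x : V) : ℕ :=
  ((G.dir.image Prod.fst ∪ G.dir.image Prod.snd).filter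
    (fun z => G.dreach z x)).card

lemma auxm_lt (hc : ¬ G.HasDirCycle) {a b : V} (hab : (a, b) ∈ G.dir) :
    auxm G a < auxm G b := by
  classical
  unfold auxm
  apply Finset.card_lt_card
  constructor
  · intro z hz
    rw [Finset.mem_filter] at hz ⊢
    exact ⟨hz.1, hz.2.tail hab⟩
  · intro hsub
    have hb : b ∈ (G.dir.image Prod.fst ∪ G.dir.image Prod.snd).filter
        (fun z => G.dreach z b) := by
      rw [Finset.mem_filter]
      exact ⟨Finset.mem_union_right _ (Finset.mem_image.mpr ⟨(a, b), hab, rfl⟩),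
        ReflTransGen.refl⟩
    have := hsub hb
    rw [Finset.mem_filter] at this
    exact hc ⟨(a, b), hab, this.2⟩

/-- If `u` is not in a root component, some node in its undirected component has
a directed in-edge in `N`. -/
lemma aux_exists_ndir_target (hu : ¬ InRootComp N u) :
    ∃ y c, N.ureach u y ∧ (c, y) ∈ N.dir := by
  by_contra h
  push_neg at h
  apply hu
  intro w hw
  have : N.ureach u w := by
    induction hw using Relation.ReflTransGen.head_induction_on with
    | refl => exact ReflTransGen.refl
    | head hstep _ ih =>
      rename_i a b _
      rcases hstep with hd | hu'
      · exact absurd hd (h b a ih)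
      · exact ih.tail (aux_ustep_symm hu')
  exact ReflTransGen.mono (fun x y h => Or.inr h) u w this

/-- Propagation of disagreement backwards along the first partner. -/
lemma aux_propagation (hP : N.Proper) (hG : RootedPartner G N)
    (hG' : RootedPartner G' N) :
    ∀ n a1, auxm G a1 < n → ∀ a0, (a1, a0) ∈ G.dir → (a1, a0) ∉ N.dir →
      (a0, a1) ∈ G'.dir → (a0, a1) ∉ N.dir →
      ∃ s, N.ureach s a1 ∧ ∀ c, (c, s) ∉ G.dir := by
  intro n
  induction n with
  | zero => intro a1 h; omega
  | succ n ih =>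
    intro a1 hlt a0 h1 h2 h3 h4
    by_cases hc : ∃ c, (c, a1) ∈ G.dir
    · obtain ⟨a2, ha2⟩ := hc
      have hnoN : ∀ c, (c, a1) ∉ N.dir := aux_new_head_no_ndir hG' h3 h4
      have ha2n : (a2, a1) ∉ N.dir := hnoN a2
      have hu21 : s(a2, a1) ∈ N.undir := aux_new_undir hG ha2 ha2n
      have ha20 : a2 ≠ a0 := by
        intro heq
        have hu10 : s(a1, a0) ∈ N.undir := aux_new_undir hG h1 h2
        rcases aux_exactly_one hP hG hu10 with ⟨_, hnb, _⟩ | ⟨_, hna, _⟩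
        · exact hnb (heq ▸ ha2)
        · exact hna h1
      have hG'21 : (a2, a1) ∉ G'.dir := by
        intro hmem
        exact ha20 (aux_new_head_unique hG' h3 h4 a2 hmem)
      have h12 : (a1, a2) ∈ G'.dir ∧ (a1, a2) ∉ N.dir := by
        rcases aux_exactly_one hP hG' hu21 with ⟨hb, _, _⟩ | ⟨hb, _, hn⟩
        · exact absurd hb hG'21
        · exact ⟨hb, hn⟩
      have hm : auxm G a2 < n := by
        have := auxm_lt (aux_partner_no_cycle hG) ha2
        omega
      obtain ⟨s, hs1, hs2⟩ := ih a2 hm a1 ha2 ha2n h12.1 h12.2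
      exact ⟨s, hs1.tail hu21, hs2⟩
    · push_neg at hc
      exact ⟨a1, ReflTransGen.refl, hc⟩

/-- Two rooted partners cannot disagree on the direction of an undirected edge
whose endpoint lies outside all root components. -/
lemma aux_no_disagree (hP : N.Proper) (hG : RootedPartner G N)
    (hG' : RootedPartner G' N) {u v : V} (hu : ¬ InRootComp N u)
    (h1 : (u, v) ∈ G.dir) (h1n : (u, v) ∉ N.dir)
    (h2 : (v, u) ∈ G'.dir) (h2n : (v, u) ∉ N.dir) : False := by
  obtain ⟨s, hs1, hs2⟩ := aux_propagation hP hG hG' (auxm G u + 1) u (by omega)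
    v h1 h1n h2 h2n
  obtain ⟨y, c, hy1, hy2⟩ := aux_exists_ndir_target hu
  have hyG : ∀ d, (d, y) ∈ G.dir → (d, y) ∈ N.dir := by
    intro d hd
    by_contra hdn
    exact aux_new_head_no_ndir hG hd hdn c hy2
  have hsG : ∀ d, (d, s) ∈ G.dir → (d, s) ∈ N.dir := fun d hd => absurd hd (hs2 d)
  have : s = y := aux_source_unique hP hG hsG hyG (hs1.trans hy1)
  exact hs2 c (this ▸ hG.1.1.2.1 hy2)

end Aux

theorem statement_5 {V : Type} [DecidableEq V] (N : SDG V) (hP : N.Proper)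
    (hN : IsNetwork N) (G1 G2 : SDG V)
    (h1 : RootedPartner G1 N) (h2 : RootedPartner G2 N) :
    ∀ u v : V, s(u, v) ∈ N.undir → ¬ InRootComp N u →
      ((u, v) ∈ G1.dir ↔ (u, v) ∈ G2.dir) := by
  intro u v huv hu
  have hNuv : (u, v) ∉ N.dir := aux_undir_not_dir hP huv
  have hNvu : (v, u) ∉ N.dir := aux_undir_not_dir hP (by rwa [Sym2.eq_swap])
  constructor
  · intro hd1
    by_contra hd2
    rcases aux_exactly_one hP h2 huv with ⟨ha, _, _⟩ | ⟨ha, _, _⟩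
    · exact hd2 ha
    · exact aux_no_disagree hP h1 h2 hu hd1 hNuv ha hNvu
  · intro hd2
    by_contra hd1
    rcases aux_exactly_one hP h1 huv with ⟨ha, _, _⟩ | ⟨ha, _, _⟩
    · exact hd1 ha
    · exact aux_no_disagree hP h2 h1 hu hd2 hNuv ha hNvu

end SDG
end

section
/- Given a root choice function ρ of a network N, there exists a unique rooted partner N⁺_ρ of N whose set of root nodes (nodes of in-degree 0 with at least one outgoing edge, i.e., sources) is exactly the image of ρ; conversely, every rooted partner G of N equals N⁺_ρ for a unique root choice function ρ. Hence rooted partners of N are in bijection with root choice functions. -/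
open Relation

namespace SDG

variable {V : Type} [DecidableEq V]

set_option linter.unusedSectionVars false
set_option maxHeartbeats 1000000

section Lists
variable {V : Type} {r q : V → V → Prop}

lemma chain'_rtg : ∀ (l : List V) (u v : V), l.head? = some u → l.getLast? = some v →
    l.Chain' r → ReflTransGen r u v := by
  intro l
  induction l with
  | nil => intro u v h; simp at h
  | cons a l ih =>
    intro u v hh hl hc
    simp at hh; subst hh
    cases l with
    | nil => simp at hl; subst hl; exact .refl
    | cons b t =>
      rw [List.getLast?_cons_cons] at hl
      simp only [List.Chain', List.isChain_cons_cons] at hc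
      exact .head hc.1 (ih b v rfl hl hc.2)

lemma exists_nodup_path {u v : V} (h : ReflTransGen r u v) :
    ∃ l : List V, l.Nodup ∧ l.head? = some u ∧ l.getLast? = some v ∧ l.Chain' r := by
  induction h using ReflTransGen.head_induction_on with
  | refl => exact ⟨[v], by simp [List.Chain']⟩
  | head hr _ ih =>
    rename_i a c _
    obtain ⟨l, hnd, hh, hl, hc⟩ := ih
    by_cases ha : a ∈ l
    · obtain ⟨l₁, l₂, rfl⟩ := List.append_of_mem ha
      refine ⟨a :: l₂, hnd.sublist (List.sublist_append_right l₁ _), rfl, ?_, ?_⟩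
      · rwa [List.getLast?_append_cons] at hl
      · exact List.IsChain.suffix hc ⟨l₁, rfl⟩
    · cases l with
      | nil => simp at hh
      | cons b t =>
        simp at hh; subst hh
        exact ⟨a :: b :: t, by simp [hnd, ha], rfl, by rwa [List.getLast?_cons_cons], by
          simp only [List.Chain', List.isChain_cons_cons]; exact ⟨hr, hc⟩⟩

lemma zip_mem_get {l : List V} {x y : V} (h : (x, y) ∈ l.zip l.tail) :
    ∃ i : ℕ, ∃ hi : i + 1 < l.length, l.get ⟨i, by omega⟩ = x ∧ l.get ⟨i+1, hi⟩ = y := by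
  induction l with
  | nil => simp at h
  | cons a t ih =>
    cases t with
    | nil => simp at h
    | cons b t' =>
      rcases List.mem_cons.1 h with h1 | h2
      · cases h1
        exact ⟨0, by simp, rfl, rfl⟩
      · obtain ⟨i, hi, h1, h2⟩ := ih h2
        exact ⟨i+1, by simpa using hi, h1, h2⟩

lemma chain'_imp_on : ∀ (l : List V), (∀ x y, (x, y) ∈ l.zip l.tail → r x y → q x y) →
    l.Chain' r → l.Chain' q := by
  intro l
  induction l with
  | nil => intros; simp [List.Chain']
  | cons a t ih =>
    cases t with
    | nil => intros; simp [List.Chain']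
    | cons b t' =>
      intro h hc
      simp only [List.Chain', List.isChain_cons_cons] at hc ⊢
      refine ⟨h a b (by simp) hc.1, ih (fun x y hm => h x y (List.mem_cons_of_mem _ hm)) hc.2⟩

lemma exists_penult_pair : ∀ (l : List V) (u v : V), l.head? = some u → l.getLast? = some v →
    u ≠ v → ∃ c, (c, v) ∈ l.zip l.tail := by
  intro l
  induction l with
  | nil => intro u v h; simp at h
  | cons a t ih =>
    intro u v hh hl hne
    simp at hh; subst hh
    cases t with
    | nil => simp at hl; exact absurd hl hne
    | cons b t' =>
      rw [List.getLast?_cons_cons] at hl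
      by_cases hbv : b = v
      · exact ⟨a, by simp [hbv]⟩
      · obtain ⟨c, hc⟩ := ih b v rfl hl hbv
        exact ⟨c, List.mem_cons_of_mem _ hc⟩

lemma zip_mem_left {l : List V} {x y : V} (h : (x, y) ∈ l.zip l.tail) : x ∈ l :=
  (List.of_mem_zip h).1

lemma zip_mem_right {l : List V} {x y : V} (h : (x, y) ∈ l.zip l.tail) : y ∈ l :=
  List.mem_of_mem_tail (List.of_mem_zip h).2

lemma rtg_symm (hs : Symmetric r) {a b : V} (h : ReflTransGen r a b) : ReflTransGen r b a :=
  @Std.Symm.symm _ _ (@ReflTransGen.stdSymm _ r ⟨hs⟩) _ _ h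
end Lists

section Sym
variable {V : Type}

lemma sym2_mem_of_eq {a b : V} {p : Sym2 V} (h : s(a, b) = p) : a ∈ p ∧ b ∈ p := by
  subst h; exact ⟨Sym2.mem_mk_left _ _, Sym2.mem_mk_right _ _⟩

lemma epts_aux (p : Sym2 V) : ∃ ab : V × V, s(ab.1, ab.2) = p :=
  Sym2.ind (f := fun p => ∃ ab : V × V, s(ab.1, ab.2) = p) (fun x y => ⟨(x, y), rfl⟩) p

noncomputable def epts (p : Sym2 V) : V × V := Classical.choose (epts_aux p)

lemma epts_spec (p : Sym2 V) : s((epts p).1, (epts p).2) = p :=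
  Classical.choose_spec (epts_aux p)

lemma epts_cases {x y : V} : epts s(x, y) = (x, y) ∨ epts s(x, y) = (y, x) := by
  have h := epts_spec s(x, y)
  rcases Sym2.eq_iff.1 h with ⟨h1, h2⟩ | ⟨h1, h2⟩
  · left; exact Prod.ext h1 h2
  · right; exact Prod.ext h1 h2

lemma index_orient [DecidableEq V] (l : List V) (hnd : l.Nodup) {x y : V}
    (hxy : (x, y) ∈ l.zip l.tail) :
    (if l.idxOf (epts (s(x,y))).1 ≤ l.idxOf (epts (s(x,y))).2 then epts (s(x,y))
     else ((epts (s(x,y))).2, (epts (s(x,y))).1)) = (x, y) := by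
  obtain ⟨i, hi, hx, hy⟩ := zip_mem_get hxy
  have hxm : x ∈ l := zip_mem_left hxy
  have hym : y ∈ l := zip_mem_right hxy
  have hix : l.idxOf x = i := by
    have h1 : l.get ⟨l.idxOf x, List.idxOf_lt_length_iff.2 hxm⟩ = x := List.idxOf_get _
    have := (hnd.get_inj_iff).1 (h1.trans hx.symm)
    exact congrArg Fin.val this
  have hiy : l.idxOf y = i + 1 := by
    have h1 : l.get ⟨l.idxOf y, List.idxOf_lt_length_iff.2 hym⟩ = y := List.idxOf_get _
    have := (hnd.get_inj_iff).1 (h1.trans hy.symm)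
    exact congrArg Fin.val this
  rcases epts_cases (x := x) (y := y) with h | h
  · rw [h]; simp only [hix, hiy]; rw [if_pos (by omega)]
  · rw [h]; simp only [hix, hiy]; rw [if_neg (by omega)]
end Sym


variable {N M G : SDG V}

lemma ideg_eq_zero_iff {v : V} : N.ideg v = 0 ↔ ∀ e ∈ N.dir, e.2 ≠ v := by
  unfold ideg; rw [Finset.card_eq_zero, Finset.filter_eq_empty_iff]

lemma ideg_ne_zero {e : V × V} (he : e ∈ N.dir) : N.ideg e.2 ≠ 0 :=
  fun h => (ideg_eq_zero_iff.1 h) e he rfl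

lemma ideg_le_of_subset (h : N.dir ⊆ M.dir) (v : V) : N.ideg v ≤ M.ideg v :=
  Finset.card_le_card (Finset.filter_subset_filter _ h)

lemma two_le_ideg_s6 {e f : V × V} {v : V} (he : e ∈ N.dir) (hf : f ∈ N.dir)
    (hne : e ≠ f) (he2 : e.2 = v) (hf2 : f.2 = v) : 2 ≤ N.ideg v := by
  have : 1 < (N.dir.filter fun e => e.2 = v).card :=
    Finset.one_lt_card.2 ⟨e, Finset.mem_filter.2 ⟨he, he2⟩, f, Finset.mem_filter.2 ⟨hf, hf2⟩, hne⟩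
  unfold ideg; omega

lemma ideg_one_in {e f : V × V} (hi : N.ideg e.2 ≤ 1) (he : e ∈ N.dir) (hf : f ∈ N.dir)
    (hef : f.2 = e.2) : f = e := by
  by_contra hne
  have := two_le_ideg_s6 hf he hne hef rfl
  omega

lemma ustep_symm : Symmetric N.ustep := fun x y h => by
  unfold ustep at *; rwa [Sym2.eq_swap]

lemma ureach_symm {a b : V} (h : N.ureach a b) : N.ureach b a :=
  @Std.Symm.symm _ _ (@ReflTransGen.stdSymm _ N.ustep ⟨ustep_symm⟩) _ _ h

lemma ureach_sreach {a b : V} (h : N.ureach a b) : N.sreach a b :=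
  ReflTransGen.mono (r := N.ustep) (p := N.sstep) (fun _ _ h => Or.inr h) _ _ h

lemma sim_of_ureach {a b : V} (h : N.ureach a b) : N.sim a b :=
  ⟨ureach_sreach h, ureach_sreach (ureach_symm h)⟩

lemma mem_mem_ureach {p : Sym2 V} {a b : V} (hp : p ∈ N.undir) (ha : a ∈ p) (hb : b ∈ p) :
    N.ureach a b := by
  induction p using Sym2.ind with
  | _ x y =>
    have hstep : N.ustep x y := hp
    rcases Sym2.mem_iff.1 ha with rfl | rfl <;> rcases Sym2.mem_iff.1 hb with rfl | rfl
    · exact .refl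
    · exact .single hstep
    · exact .single (ustep_symm hstep)
    · exact .refl

/-- orientation of all undirected edges by a choice function -/
def orient (N : SDG V) (c : Sym2 V → V × V) : SDG V := ⟨∅, N.dir ∪ N.undir.image c⟩

lemma orient_isDirected (c : Sym2 V → V × V) : (N.orient c).IsDirected := rfl

lemma orient_directs (hP : N.Proper) {c : Sym2 V → V × V}
    (hc : ∀ p ∈ N.undir, s((c p).1, (c p).2) = p) : Directs N (N.orient c) := by
  refine ⟨by simp [orient], Finset.subset_union_left, ?_, ?_⟩
  · intro e he hne
    rcases Finset.mem_union.1 he with h | h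
    · exact absurd h hne
    · obtain ⟨p, hp, rfl⟩ := Finset.mem_image.1 h
      exact ⟨by rw [hc p hp]; exact hp, by simp [orient]⟩
  · intro p hp _
    refine ⟨c p, ⟨Finset.mem_union_right _ (Finset.mem_image_of_mem c hp), ?_, hc p hp⟩, ?_⟩
    · intro hmem; exact (hP.2.2 (c p) hmem) (by rw [hc p hp]; exact hp)
    · rintro e ⟨hemem, henot, hes⟩
      rcases Finset.mem_union.1 hemem with h | h
      · exact absurd h henot
      · obtain ⟨q, hq, rfl⟩ := Finset.mem_image.1 h
        have hqp : q = p := by rw [← hc q hq, hes]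
        rw [hqp]

lemma dir_not_sreach (hP : N.Proper) (hA : N.Acyclic) {u v : V} (huv : (u, v) ∈ N.dir) :
    ¬ N.sreach v u := by
  intro h
  obtain ⟨l, hnd, hh, hl, hc⟩ := exists_nodup_path h
  set c : Sym2 V → V × V := fun p =>
    (if l.idxOf (epts p).1 ≤ l.idxOf (epts p).2 then epts p
     else ((epts p).2, (epts p).1)) with hcdef
  have hcspec : ∀ p ∈ N.undir, s((c p).1, (c p).2) = p := by
    intro p _
    rw [hcdef]; dsimp only
    split
    · exact epts_spec p
    · exact Sym2.eq_swap.trans (epts_spec p)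
  have hchain : l.Chain' (N.orient c).dstep := by
    refine chain'_imp_on l ?_ hc
    intro x y hxy hs
    rcases hs with hd | hu
    · exact Finset.mem_union_left _ hd
    · refine Finset.mem_union_right _ (Finset.mem_image.2 ⟨s(x, y), hu, ?_⟩)
      exact index_orient l hnd hxy
  have hdr : (N.orient c).dreach v u := chain'_rtg l v u hh hl hchain
  exact (hA _ (orient_directs hP hcspec) (orient_isDirected c))
    ⟨(u, v), Finset.mem_union_left _ huv, hdr⟩

/-- reachability by undirected edges avoiding a given edge -/
def ureachA (N : SDG V) (p : Sym2 V) : V → V → Prop :=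
  ReflTransGen (fun x y => N.ustep x y ∧ s(x, y) ≠ p)

lemma ureachA_symm {p : Sym2 V} {a b : V} (h : N.ureachA p a b) : N.ureachA p b a :=
  @Std.Symm.symm _ _ (@ReflTransGen.stdSymm _ (fun x y => N.ustep x y ∧ s(x, y) ≠ p) ⟨fun x y hxy =>
    ⟨ustep_symm hxy.1, fun he => hxy.2 (Sym2.eq_swap.trans he)⟩⟩) _ _ h

lemma ureachA_ureach {p : Sym2 V} {a b : V} (h : N.ureachA p a b) : N.ureach a b :=
  ReflTransGen.mono (r := fun x y => N.ustep x y ∧ s(x, y) ≠ p) (p := N.ustep) (fun _ _ h => h.1) _ _ h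

lemma no_avoid_cycle (hP : N.Proper) (hA : N.Acyclic) {a b : V} (hp : s(a, b) ∈ N.undir)
    (hab : a ≠ b) (h : N.ureachA s(a, b) a b) : False := by
  obtain ⟨l, hnd, hh, hl, hc⟩ := exists_nodup_path h
  set c : Sym2 V → V × V := fun p =>
    if p = s(a, b) then (b, a) else
    (if l.idxOf (epts p).1 ≤ l.idxOf (epts p).2 then epts p
     else ((epts p).2, (epts p).1)) with hcdef
  have hcspec : ∀ p ∈ N.undir, s((c p).1, (c p).2) = p := by
    intro p _
    rw [hcdef]; dsimp only
    split
    · rename_i hpe; rw [hpe]; exact Sym2.eq_swap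
    · split
      · exact epts_spec p
      · exact Sym2.eq_swap.trans (epts_spec p)
  have hchain : l.Chain' (N.orient c).dstep := by
    refine chain'_imp_on l ?_ hc
    intro x y hxy hs
    refine Finset.mem_union_right _ (Finset.mem_image.2 ⟨s(x, y), hs.1, ?_⟩)
    rw [hcdef]; dsimp only
    rw [if_neg hs.2]
    exact index_orient l hnd hxy
  have hdr : (N.orient c).dreach a b := chain'_rtg l a b hh hl hchain
  have hba : (b, a) ∈ (N.orient c).dir := by
    refine Finset.mem_union_right _ (Finset.mem_image.2 ⟨s(a, b), hp, ?_⟩)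
    rw [hcdef]; dsimp only; rw [if_pos rfl]
  exact (hA _ (orient_directs hP hcspec) (orient_isDirected c)) ⟨(b, a), hba, hdr⟩


lemma inRootComp_ideg_zero (hP : N.Proper) (hA : N.Acyclic) {v : V} (h : InRootComp N v) :
    N.ideg v = 0 := by
  rw [ideg_eq_zero_iff]
  intro e he hev
  have he' : (e.1, v) ∈ N.dir := by rwa [← hev, Prod.mk.eta]
  have hs : N.sreach e.1 v := ReflTransGen.single (Or.inl he')
  exact dir_not_sreach hP hA he' (h e.1 hs)

lemma sreach_to_ureach {v : V} (hv : ∀ u, N.ureach v u → N.ideg u = 0) {u : V}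
    (h : N.sreach u v) : N.ureach u v := by
  induction h using ReflTransGen.head_induction_on with
  | refl => exact .refl
  | head hstep _ ih =>
    rename_i a c _
    rcases hstep with hd | hu
    · exact absurd (hv c (ureach_symm ih)) (ideg_ne_zero hd)
    · exact .head hu ih

lemma inRootComp_of_comp_zero {v : V} (hv : ∀ u, N.ureach v u → N.ideg u = 0) :
    InRootComp N v := fun u hu => ureach_sreach (ureach_symm (sreach_to_ureach hv hu))

lemma inRootComp_ureach {v u : V} (h : InRootComp N v) (hu : N.ureach v u) :
    InRootComp N u := by
  intro w hw
  have h2 := h w (hw.trans (ureach_sreach (ureach_symm hu)))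
  exact (ureach_sreach (ureach_symm hu)).trans h2

lemma comp_ideg_zero (hP : N.Proper) (hA : N.Acyclic) {v u : V} (h : InRootComp N v)
    (hu : N.ureach v u) : N.ideg u = 0 :=
  inRootComp_ideg_zero hP hA (inRootComp_ureach h hu)

lemma inRootComp_of_sim {u v : V} (h : N.sim u v) (hu : InRootComp N u) : InRootComp N v :=
  fun w hw => h.2.trans (hu w (hw.trans h.2))

lemma sim_to_ureach (hP : N.Proper) (hA : N.Acyclic) {u v : V} (hv : InRootComp N v)
    (h : N.sreach u v) : N.ureach u v :=
  sreach_to_ureach (fun u hu => comp_ideg_zero hP hA hv hu) h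

/-- the structural properties of a rooted partner that we use -/
def Good (N M : SDG V) : Prop :=
  Directs N M ∧ M.IsDirected ∧ (∀ e ∈ M.dir, e ∉ N.dir → N.ideg e.2 = 0) ∧
    (∀ e ∈ M.dir, ∀ f ∈ M.dir, e ∉ N.dir → f ∉ N.dir → e.2 = f.2 → e = f)

lemma good_orient (h : Good N M) {p : Sym2 V} (hp : p ∈ N.undir) :
    ∃! e : V × V, e ∈ M.dir ∧ e ∉ N.dir ∧ s(e.1, e.2) = p :=
  h.1.2.2.2 p hp (by rw [h.2.1]; exact Finset.notMem_empty p)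

lemma rootedPartner_good (hG : RootedPartner G N) : Good N G := by
  obtain ⟨⟨hdir, hacy, hhyb⟩, hdirected⟩ := hG
  have hsub := hdir.2.1
  have key : ∀ e ∈ G.dir, e ∉ N.dir → G.ideg e.2 ≤ 1 := by
    intro e he hne
    by_contra hlt; push_neg at hlt
    have : e ∈ G.hybridEdges := Finset.mem_filter.2 ⟨he, by omega⟩
    rw [hhyb] at this
    exact hne (Finset.filter_subset _ _ this)
  refine ⟨hdir, hdirected, ?_, ?_⟩
  · intro e he hne
    rw [ideg_eq_zero_iff]
    intro f hf hfe
    have hfG : f ∈ G.dir := hsub hf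
    have hef : f ≠ e := fun h => hne (h ▸ hf)
    have h2 := two_le_ideg_s6 (v := e.2) hfG he hef hfe rfl
    have h1 := key e he hne
    omega
  · intro e he f hf hen hfn hef
    exact (ideg_one_in (key e he hen) he hf hef.symm).symm

lemma claimL (hgood : Good N M) :
    ∀ (l : List V), l.Nodup → l.Chain' N.ustep → ∀ u, l.head? = some u →
      (∀ e ∈ M.dir, e ∉ N.dir → e.2 = u → e.1 ∉ l) →
      ∀ x y, (x, y) ∈ l.zip l.tail → (x, y) ∈ M.dir ∧ (x, y) ∉ N.dir := by
  intro l
  induction l with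
  | nil => intro _ _ u _ _ x y h; simp at h
  | cons a t ih =>
    intro hnd hch u hh hstart x y hxy
    simp only [List.head?_cons, Option.some.injEq] at hh
    subst hh
    cases t with
    | nil => simp at hxy
    | cons b t' =>
      have hab : N.ustep a b := (List.isChain_cons_cons.1 hch).1
      obtain ⟨e, ⟨hem, hen, hes⟩, _⟩ := good_orient hgood hab
      have hecases : e = (a, b) ∨ e = (b, a) := by
        rcases Sym2.eq_iff.1 hes with ⟨h1, h2⟩ | ⟨h1, h2⟩
        · left; exact Prod.ext h1 h2
        · right; exact Prod.ext h1 h2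
      have heab : (a, b) ∈ M.dir ∧ (a, b) ∉ N.dir := by
        rcases hecases with rfl | rfl
        · exact ⟨hem, hen⟩
        · exact absurd (List.mem_cons_of_mem a (List.mem_cons_self (a := b) (l := t')))
            (hstart (b, a) hem hen rfl)
      rcases List.mem_cons.1 hxy with h1 | h2
      · cases h1; exact heab
      · refine ih hnd.of_cons (List.isChain_cons_cons.1 hch).2 b rfl ?_ x y h2
        intro f hf hfn hfb hmem
        have hfe : f = (a, b) :=
          hgood.2.2.2 f hf (a, b) heab.1 hfn heab.2 (by rw [hfb])
        rw [hfe] at hmem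
        exact (List.nodup_cons.1 hnd).1 hmem

lemma claimL_last (hgood : Good N M) {u b : V} (hub : u ≠ b) (hur : N.ureach u b)
    (hstart : ∀ e ∈ M.dir, e ∉ N.dir → e.2 ≠ u) :
    ∃ a, (a, b) ∈ M.dir ∧ (a, b) ∉ N.dir := by
  obtain ⟨l, hnd, hh, hl, hc⟩ := exists_nodup_path hur
  obtain ⟨a, ha⟩ := exists_penult_pair l u b hh hl hub
  exact ⟨a, (claimL hgood l hnd hc u hh (fun e he hn h2 _ => hstart e he hn h2) a b ha).1,
    (claimL hgood l hnd hc u hh (fun e he hn h2 _ => hstart e he hn h2) a b ha).2⟩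

lemma root_unique (hgood : Good N M) {r r' : V} (hr : M.ideg r = 0) (hr' : M.ideg r' = 0)
    (h : N.ureach r r') : r = r' := by
  by_contra hne
  obtain ⟨a, ha, _⟩ := claimL_last hgood hne h
    (fun e he _ h2 => (ideg_eq_zero_iff.1 hr) e he h2)
  exact (ideg_eq_zero_iff.1 hr') (a, r') ha rfl

lemma root_inRootComp (hP : N.Proper) (hA : N.Acyclic) (hgood : Good N M) {r : V}
    (hr : M.ideg r = 0) : InRootComp N r := by
  apply inRootComp_of_comp_zero
  intro u hu
  by_contra hne
  have hNr : N.ideg r = 0 := by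
    have := ideg_le_of_subset hgood.1.2.1 r; omega
  have hur : u ≠ r := fun h => hne (h ▸ hNr)
  obtain ⟨a, ha, _⟩ := claimL_last hgood hur (ureach_symm hu)
    (fun e he hen h2 => hne (h2 ▸ hgood.2.2.1 e he hen))
  exact (ideg_eq_zero_iff.1 hr) (a, r) ha rfl

lemma hybrid_eq_of (hsub : N.dir ⊆ M.dir) (hE1 : ∀ e ∈ M.dir, e ∉ N.dir → N.ideg e.2 = 0)
    (hE2 : ∀ e ∈ M.dir, ∀ f ∈ M.dir, e ∉ N.dir → f ∉ N.dir → e.2 = f.2 → e = f) :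
    M.hybridEdges = N.hybridEdges := by
  have filt : ∀ v, 2 ≤ M.ideg v →
      (M.dir.filter fun e => e.2 = v) = (N.dir.filter fun e => e.2 = v) := by
    intro v h2
    apply Finset.Subset.antisymm _ (Finset.filter_subset_filter _ hsub)
    intro g hg
    obtain ⟨hgM, hgv⟩ := Finset.mem_filter.1 hg
    by_cases hgN : g ∈ N.dir
    · exact Finset.mem_filter.2 ⟨hgN, hgv⟩
    · exfalso
      have hz : N.ideg v = 0 := hgv ▸ hE1 g hgM hgN
      obtain ⟨f, hf, hfg⟩ := Finset.exists_mem_ne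
        (s := M.dir.filter fun e => e.2 = v)
        (by have hh : M.ideg v = (M.dir.filter fun e => e.2 = v).card := rfl; omega) g
      obtain ⟨hfM, hfv⟩ := Finset.mem_filter.1 hf
      by_cases hfN : f ∈ N.dir
      · exact (hfv ▸ ideg_ne_zero hfN) hz
      · exact hfg (hE2 f hfM g hgM hfN hgN (hfv.trans hgv.symm))
  apply Finset.ext
  intro e
  simp only [hybridEdges, Finset.mem_filter]
  constructor
  · rintro ⟨he, h2⟩
    have hfe := filt e.2 h2
    have heN : e ∈ N.dir := by
      have : e ∈ N.dir.filter fun f => f.2 = e.2 := hfe ▸ Finset.mem_filter.2 ⟨he, rfl⟩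
      exact (Finset.mem_filter.1 this).1
    refine ⟨heN, ?_⟩
    have : N.ideg e.2 = M.ideg e.2 := by unfold ideg; rw [hfe]
    omega
  · rintro ⟨he, h2⟩
    have := ideg_le_of_subset hsub e.2
    exact ⟨hsub he, by omega⟩

lemma directed_directs_eq {H : SDG V} (hM : M.IsDirected) (hH : Directs M H)
    (hHd : H.IsDirected) : H = M := by
  obtain ⟨h1, h2, h3, _⟩ := hH
  have hdir : H.dir = M.dir := by
    apply Finset.Subset.antisymm _ h2
    intro e he
    by_contra hne
    exact absurd (h3 e he hne).1 (by rw [hM]; exact Finset.notMem_empty _)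
  cases H; cases M
  unfold IsDirected at hM hHd
  simp_all

lemma acyclic_of_directed (hA : N.Acyclic) (hd : Directs N M) (hdd : M.IsDirected) :
    M.Acyclic := by
  intro H hH hHd
  rw [directed_directs_eq hdd hH hHd]
  exact hA M hd hdd

lemma good_rootedPartner (hA : N.Acyclic) (hgood : Good N M) : RootedPartner M N :=
  ⟨⟨hgood.1, acyclic_of_directed hA hgood.1 hgood.2.1,
    hybrid_eq_of hgood.1.2.1 hgood.2.2.1 hgood.2.2.2⟩, hgood.2.1⟩


lemma ureach_to_avoid {s t x y : V} (h : N.ureach s t) :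
    N.ureachA s(x, y) s t ∨ N.ureachA s(x, y) s x ∨ N.ureachA s(x, y) s y := by
  induction h with
  | refl => exact Or.inl .refl
  | tail _ hstep ih =>
    rename_i m t' _
    rcases ih with h1 | h2
    · by_cases he : s(m, t') = s(x, y)
      · rcases Sym2.eq_iff.1 he with ⟨rfl, rfl⟩ | ⟨rfl, rfl⟩
        · exact Or.inr (Or.inl h1)
        · exact Or.inr (Or.inr h1)
      · exact Or.inl (h1.tail ⟨hstep, he⟩)
    · exact Or.inr h2

lemma exists_root_in_comp (hP : N.Proper) (hA : N.Acyclic) (hgood : Good N M) {v : V}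
    (hv : InRootComp N v) : ∃ r, M.ideg r = 0 ∧ N.ureach v r := by
  by_contra hcon
  push_neg at hcon
  have hstep : ∀ x : {x // N.ureach v x}, ∃ y : {x // N.ureach v x}, (y.1, x.1) ∈ M.dir := by
    rintro ⟨x, hx⟩
    have hne : M.ideg x ≠ 0 := fun h => hcon x h hx
    have hex : ∃ e ∈ M.dir, e.2 = x := by
      by_contra hno; push_neg at hno; exact hne (ideg_eq_zero_iff.2 hno)
    obtain ⟨e, he, he2⟩ := hex
    by_cases heN : e ∈ N.dir
    · exact absurd (comp_ideg_zero hP hA hv hx) (he2 ▸ ideg_ne_zero heN)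
    · have hu : N.ustep e.1 x := by
        have h1 := (hgood.1.2.2.1 e he heN).1
        unfold ustep
        rwa [← he2]
      refine ⟨⟨e.1, hx.tail (ustep_symm hu)⟩, ?_⟩
      show (e.1, x) ∈ M.dir
      rw [← he2, Prod.mk.eta]; exact he
  set g : {x // N.ureach v x} → {x // N.ureach v x} := fun p => (hstep p).choose with hg
  set f : ℕ → {x // N.ureach v x} := fun n => g^[n] ⟨v, .refl⟩ with hfdef
  have hf : ∀ n, ((f (n + 1)).1, (f n).1) ∈ M.dir := by
    intro n
    have : f (n + 1) = g (f n) := Function.iterate_succ_apply' g n _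
    rw [this, hg]
    exact (hstep (f n)).choose_spec
  have hdr : ∀ m n : ℕ, m ≤ n → M.dreach (f n).1 (f m).1 := by
    intro m n hmn
    induction n, hmn using Nat.le_induction with
    | base => exact .refl
    | succ n hmn ih => exact .head (hf n) ih
  set S : Finset V := M.dir.image Prod.snd with hS
  have hmap : ∀ i : Fin (S.card + 1), (fun i : Fin (S.card + 1) => (f i.1).1) i ∈ S := by
    intro i
    exact Finset.mem_image.2 ⟨((f (i.1 + 1)).1, (f i.1).1), hf i.1, rfl⟩
  have hcard : S.card < (Finset.univ : Finset (Fin (S.card + 1))).card := by simp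
  obtain ⟨i, _, j, _, hij, heq⟩ :=
    Finset.exists_ne_map_eq_of_card_lt_of_maps_to hcard (fun i _ => hmap i)
  have hcyc : M.HasDirCycle := by
    rcases lt_or_gt_of_ne hij with hlt | hlt
    · exact ⟨((f (i.1 + 1)).1, (f i.1).1), hf i.1, by
        show M.dreach (f i.1).1 (f (i.1 + 1)).1
        rw [show (f i.1).1 = (f j.1).1 from heq]
        exact hdr (i.1 + 1) j.1 hlt⟩
    · exact ⟨((f (j.1 + 1)).1, (f j.1).1), hf j.1, by
        show M.dreach (f j.1).1 (f (j.1 + 1)).1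
        rw [show (f j.1).1 = (f i.1).1 from heq.symm]
        exact hdr (j.1 + 1) i.1 hlt⟩
  exact (hA M hgood.1 hgood.2.1) hcyc


variable {ρfn : V → V}

lemma sdg_ext {A B : SDG V} (h1 : A.undir = B.undir) (h2 : A.dir = B.dir) : A = B := by
  cases A; cases B; simp_all

lemma orient_extra {c : Sym2 V → V × V} {e : V × V} (he : e ∈ (N.orient c).dir)
    (hen : e ∉ N.dir) : ∃ p ∈ N.undir, c p = e := by
  rcases Finset.mem_union.1 he with h | h
  · exact absurd h hen
  · obtain ⟨p, hp, hpe⟩ := Finset.mem_image.1 h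
    exact ⟨p, hp, hpe⟩

lemma rho_sim (hρ : RootChoice N ρfn) {v : V} (h : InRootComp N v) : N.sim v (ρfn v) :=
  (hρ.1 v h).1

lemma rho_const (hρ : RootChoice N ρfn) {u v : V} (hu : InRootComp N u) (hv : InRootComp N v)
    (h : N.sim u v) : ρfn u = ρfn v := (hρ.1 v hv).2 u hu h

lemma rho_inRoot (hρ : RootChoice N ρfn) {v : V} (h : InRootComp N v) :
    InRootComp N (ρfn v) := inRootComp_of_sim (rho_sim hρ h) h

lemma rho_ureach (hP : N.Proper) (hA : N.Acyclic) (hρ : RootChoice N ρfn) {v : V}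
    (h : InRootComp N v) : N.ureach v (ρfn v) :=
  ureach_symm (sim_to_ureach hP hA h (rho_sim hρ h).2)

lemma rho_idem (hρ : RootChoice N ρfn) {v : V} (h : InRootComp N v) : ρfn (ρfn v) = ρfn v :=
  rho_const hρ (rho_inRoot hρ h) h ⟨(rho_sim hρ h).2, (rho_sim hρ h).1⟩

open Classical in
/-- orientation choice for the rooted partner determined by a root choice function:
in root components, orient away from the chosen root; elsewhere copy `G₀` -/
noncomputable def rcOrient (N G₀ : SDG V) (ρfn : V → V) (p : Sym2 V) : V × V :=
  if InRootComp N (epts p).1 then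
    (if N.ureachA p (ρfn (epts p).1) (epts p).1 then epts p else ((epts p).2, (epts p).1))
  else if h : ∃ e : V × V, e ∈ G₀.dir ∧ e ∉ N.dir ∧ s(e.1, e.2) = p then h.choose
  else epts p

lemma rcOrient_spec (N G₀ : SDG V) (ρfn : V → V) (p : Sym2 V) :
    s((rcOrient N G₀ ρfn p).1, (rcOrient N G₀ ρfn p).2) = p := by
  unfold rcOrient
  split
  · split
    · exact epts_spec p
    · exact Sym2.eq_swap.trans (epts_spec p)
  · split
    · rename_i h; exact h.choose_spec.2.2
    · exact epts_spec p

variable {G₀ : SDG V} {ρfn : V → V}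

lemma rc_extra (hP : N.Proper) (hA : N.Acyclic) (hG₀ : RootedPartner G₀ N)
    (hρ : RootChoice N ρfn) {p : Sym2 V} (hp : p ∈ N.undir) :
    (¬ InRootComp N (rcOrient N G₀ ρfn p).2 ∧ rcOrient N G₀ ρfn p ∈ G₀.dir ∧
      rcOrient N G₀ ρfn p ∉ N.dir) ∨
    (InRootComp N (rcOrient N G₀ ρfn p).2 ∧
      N.ureachA p (ρfn (rcOrient N G₀ ρfn p).2) (rcOrient N G₀ ρfn p).1 ∧
      ¬ N.ureachA p (ρfn (rcOrient N G₀ ρfn p).2) (rcOrient N G₀ ρfn p).2) := by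
  have hsab : s((epts p).1, (epts p).2) = p := epts_spec p
  have hstep : N.ustep (epts p).1 (epts p).2 := by unfold ustep; rwa [hsab]
  have hnd : (epts p).1 ≠ (epts p).2 := by
    intro h
    apply hP.1 p hp
    rw [← hsab, Sym2.mk_isDiag_iff]
    exact h
  by_cases h1 : InRootComp N (epts p).1
  · right
    have h2 : InRootComp N (epts p).2 :=
      inRootComp_of_sim (sim_of_ureach (ReflTransGen.single hstep)) h1
    have hcst : ρfn (epts p).2 = ρfn (epts p).1 :=
      rho_const hρ h2 h1 (sim_of_ureach (ureach_symm (ReflTransGen.single hstep)))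
    rw [rcOrient, if_pos h1]
    by_cases hT : N.ureachA p (ρfn (epts p).1) (epts p).1
    · rw [if_pos hT]
      refine ⟨h2, by rw [hcst]; exact hT, ?_⟩
      rw [hcst]
      intro hF
      apply no_avoid_cycle hP hA (a := (epts p).1) (b := (epts p).2) (by rwa [hsab]) hnd
      rw [hsab]
      exact (ureachA_symm hT).trans hF
    · rw [if_neg hT]
      refine ⟨h1, ?_, hT⟩
      have hra : N.ureach (ρfn (epts p).1) (epts p).1 :=
        ureach_symm (rho_ureach hP hA hρ h1)
      rcases ureach_to_avoid (x := (epts p).1) (y := (epts p).2) hra with h | h | h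
      · exact absurd (by rwa [hsab] at h) hT
      · exact absurd (by rwa [hsab] at h) hT
      · rwa [hsab] at h
  · left
    have hex : ∃ e : V × V, e ∈ G₀.dir ∧ e ∉ N.dir ∧ s(e.1, e.2) = p :=
      (good_orient (rootedPartner_good hG₀) hp).exists
    rw [rcOrient, if_neg h1, dif_pos hex]
    obtain ⟨he1, he2, he3⟩ := hex.choose_spec
    refine ⟨?_, he1, he2⟩
    intro hmem
    apply h1
    refine inRootComp_ureach hmem (mem_mem_ureach hp ?_ ?_)
    · exact (sym2_mem_of_eq he3).2
    · exact (sym2_mem_of_eq hsab).1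


lemma rc_E1 (hP : N.Proper) (hA : N.Acyclic) (hG₀ : RootedPartner G₀ N)
    (hρ : RootChoice N ρfn) :
    ∀ e ∈ (N.orient (rcOrient N G₀ ρfn)).dir, e ∉ N.dir → N.ideg e.2 = 0 := by
  intro e he hen
  obtain ⟨p, hp, hpe⟩ := orient_extra he hen
  rcases rc_extra hP hA hG₀ hρ hp with ⟨h1, h2, h3⟩ | ⟨h1, _, _⟩
  · rw [hpe] at h2 h3
    exact (rootedPartner_good hG₀).2.2.1 e h2 h3
  · rw [hpe] at h1
    exact inRootComp_ideg_zero hP hA h1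

lemma rc_E2 (hP : N.Proper) (hA : N.Acyclic) (hG₀ : RootedPartner G₀ N)
    (hρ : RootChoice N ρfn) :
    ∀ e ∈ (N.orient (rcOrient N G₀ ρfn)).dir, ∀ f ∈ (N.orient (rcOrient N G₀ ρfn)).dir,
      e ∉ N.dir → f ∉ N.dir → e.2 = f.2 → e = f := by
  intro e he f hf hen hfn h2
  obtain ⟨p, hp, hpe⟩ := orient_extra he hen
  obtain ⟨q, hq, hqf⟩ := orient_extra hf hfn
  have hpspec : s(e.1, e.2) = p := by rw [← hpe]; exact rcOrient_spec N G₀ ρfn p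
  have hqspec : s(f.1, f.2) = q := by rw [← hqf]; exact rcOrient_spec N G₀ ρfn q
  have hediag : e.1 ≠ e.2 := by
    intro hd
    apply hP.1 p hp
    rw [← hpspec, Sym2.mk_isDiag_iff]
    exact hd
  rcases rc_extra hP hA hG₀ hρ hp with ⟨hL1, hL2, hL3⟩ | ⟨hR1, hR2, hR3⟩ <;>
    rcases rc_extra hP hA hG₀ hρ hq with ⟨hM1, hM2, hM3⟩ | ⟨hS1, hS2, hS3⟩
  · rw [hpe] at hL2 hL3
    rw [hqf] at hM2 hM3
    exact (rootedPartner_good hG₀).2.2.2 e hL2 f hM2 hL3 hM3 h2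
  · rw [hpe] at hL1
    rw [hqf] at hS1
    rw [h2] at hL1
    exact absurd hS1 hL1
  · rw [hpe] at hR1
    rw [hqf] at hM1
    rw [h2] at hR1
    exact absurd hR1 hM1
  · rw [hpe] at hR1 hR2 hR3
    rw [hqf] at hS1 hS2 hS3
    rw [← h2] at hS2 hS3
    by_cases hef : e.1 = f.1
    · exact Prod.ext hef h2
    exfalso
    have hqspec' : s(f.1, e.2) = q := by rw [h2]; exact hqspec
    have hpq : p ≠ q := by
      intro hpq
      rw [← hpq] at hqspec'
      rcases Sym2.eq_iff.1 (hpspec.trans hqspec'.symm) with ⟨h1', _⟩ | ⟨h1', _⟩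
      · exact hef h1'
      · exact hediag h1'
    obtain ⟨l, hnd, hh, hl, hc⟩ := exists_nodup_path hR2
    by_cases hvl : e.2 ∈ l
    · obtain ⟨l₁, l₂, rfl⟩ := List.append_of_mem hvl
      have hpre : (l₁ ++ [e.2]).Chain' (fun x y => N.ustep x y ∧ s(x, y) ≠ p) :=
        List.IsChain.prefix hc ⟨l₂, by simp⟩
      apply hR3
      cases l₁ with
      | nil =>
        have : e.2 = ρfn e.2 := by simpa using hh
        rw [← this]
        exact .refl
      | cons a l₁' =>
        have ha : a = ρfn e.2 := by simpa using hh
        subst ha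
        exact chain'_rtg _ _ _ (by simp) (by rw [List.getLast?_concat]) hpre
    · apply hS3
      have hq_chain : l.Chain' (fun x y => N.ustep x y ∧ s(x, y) ≠ q) := by
        refine chain'_imp_on l ?_ hc
        intro x y hxy hr
        refine ⟨hr.1, fun hxyq => ?_⟩
        have hmem : e.2 ∈ s(x, y) := by
          rw [hxyq, ← hqspec']
          exact Sym2.mem_mk_right _ _
        rcases Sym2.mem_iff.1 hmem with rfl | rfl
        · exact hvl (zip_mem_left hxy)
        · exact hvl (zip_mem_right hxy)
      have hrtg : N.ureachA q (ρfn e.2) e.1 := chain'_rtg l _ _ hh hl hq_chain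
      refine hrtg.tail ⟨?_, ?_⟩
      · show s(e.1, e.2) ∈ N.undir
        rw [hpspec]; exact hp
      · rw [hpspec]; exact hpq

lemma rc_good (hP : N.Proper) (hA : N.Acyclic) (hG₀ : RootedPartner G₀ N)
    (hρ : RootChoice N ρfn) : Good N (N.orient (rcOrient N G₀ ρfn)) :=
  ⟨orient_directs hP (fun p _ => rcOrient_spec N G₀ ρfn p), orient_isDirected _,
    rc_E1 hP hA hG₀ hρ, rc_E2 hP hA hG₀ hρ⟩

lemma rc_no_extra_rho (hP : N.Proper) (hA : N.Acyclic) (hG₀ : RootedPartner G₀ N)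
    (hρ : RootChoice N ρfn) {e : V × V} (he : e ∈ (N.orient (rcOrient N G₀ ρfn)).dir)
    (hen : e ∉ N.dir) {u : V} (hu : InRootComp N u) : e.2 ≠ ρfn u := by
  intro h2
  obtain ⟨p, hp, hpe⟩ := orient_extra he hen
  rcases rc_extra hP hA hG₀ hρ hp with ⟨h1, _, _⟩ | ⟨_, _, h3⟩
  · rw [hpe, h2] at h1
    exact h1 (rho_inRoot hρ hu)
  · rw [hpe, h2, rho_idem hρ hu] at h3
    exact h3 .refl

lemma rc_root_set (hP : N.Proper) (hA : N.Acyclic) (hG₀ : RootedPartner G₀ N)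
    (hρ : RootChoice N ρfn) :
    {v | (N.orient (rcOrient N G₀ ρfn)).ideg v = 0} = ρfn '' {v | InRootComp N v} := by
  apply Set.Subset.antisymm
  · intro v hv
    have hvz : (N.orient (rcOrient N G₀ ρfn)).ideg v = 0 := hv
    have hroot : InRootComp N v := root_inRootComp hP hA (rc_good hP hA hG₀ hρ) hvz
    refine ⟨v, hroot, ?_⟩
    by_contra hne
    have hur : N.ureach (ρfn v) v := ureach_symm (rho_ureach hP hA hρ hroot)
    obtain ⟨a, ha, _⟩ := claimL_last (rc_good hP hA hG₀ hρ) hne hur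
      (fun e he hen h2 => rc_no_extra_rho hP hA hG₀ hρ he hen hroot h2)
    exact (ideg_eq_zero_iff.1 hvz) (a, v) ha rfl
  · rintro _ ⟨u, hu, rfl⟩
    show (N.orient (rcOrient N G₀ ρfn)).ideg (ρfn u) = 0
    rw [ideg_eq_zero_iff]
    intro e he h2
    by_cases hen : e ∈ N.dir
    · have hz := inRootComp_ideg_zero hP hA (rho_inRoot hρ hu)
      exact (ideg_ne_zero hen) (h2 ▸ hz)
    · exact rc_no_extra_rho hP hA hG₀ hρ he hen hu h2

lemma extra_det {G G' : SDG V} (hg : Good N G) (hg' : Good N G') {e : V × V}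
    (he : e ∈ G.dir) (hen : e ∉ N.dir) {u₀ : V} (hu : N.ureach u₀ e.2) (hne : u₀ ≠ e.2)
    (hs : ∀ f ∈ G.dir, f ∉ N.dir → f.2 ≠ u₀) (hs' : ∀ f ∈ G'.dir, f ∉ N.dir → f.2 ≠ u₀) :
    e ∈ G'.dir := by
  obtain ⟨l, hnd, hh, hl, hc⟩ := exists_nodup_path hu
  obtain ⟨a, ha⟩ := exists_penult_pair l u₀ e.2 hh hl hne
  have h1 := claimL hg l hnd hc u₀ hh (fun f hf hfn h2 _ => hs f hf hfn h2) a e.2 ha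
  have h2 := claimL hg' l hnd hc u₀ hh (fun f hf hfn h2 _ => hs' f hf hfn h2) a e.2 ha
  have hae : (a, e.2) = e := hg.2.2.2 (a, e.2) h1.1 e he h1.2 hen rfl
  rw [← hae]
  exact h2.1

lemma partner_dir_subset (hP : N.Proper) (hA : N.Acyclic) (hρ : RootChoice N ρfn)
    {G G' : SDG V} (h1 : PartnerFor N ρfn G) (h2 : PartnerFor N ρfn G') :
    G.dir ⊆ G'.dir := by
  intro e he
  have hg := rootedPartner_good h1.1
  have hg' := rootedPartner_good h2.1
  by_cases hen : e ∈ N.dir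
  · exact hg'.1.2.1 hen
  by_cases hroot : InRootComp N e.2
  · set r := ρfn e.2 with hr
    have hrG : G.ideg r = 0 := by
      have : r ∈ {v | G.ideg v = 0} := h1.2 ▸ ⟨e.2, hroot, rfl⟩
      exact this
    have hrG' : G'.ideg r = 0 := by
      have : r ∈ {v | G'.ideg v = 0} := h2.2 ▸ ⟨e.2, hroot, rfl⟩
      exact this
    have hne : r ≠ e.2 := by
      intro hre
      exact (ideg_ne_zero he) (hre ▸ hrG)
    exact extra_det hg hg' he hen (ureach_symm (rho_ureach hP hA hρ hroot)) hne
      (fun f hf _ h2' => (ideg_eq_zero_iff.1 hrG) f hf h2')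
      (fun f hf _ h2' => (ideg_eq_zero_iff.1 hrG') f hf h2')
  · have hex : ∃ u, N.ureach e.2 u ∧ N.ideg u ≠ 0 := by
      by_contra hno
      push_neg at hno
      exact hroot (inRootComp_of_comp_zero fun u hu => hno u hu)
    obtain ⟨u₀, hu₀, hiu₀⟩ := hex
    have hz : N.ideg e.2 = 0 := hg.2.2.1 e he hen
    have hne : u₀ ≠ e.2 := fun h => hiu₀ (h ▸ hz)
    exact extra_det hg hg' he hen (ureach_symm hu₀) hne
      (fun f hf hfn h2' => hiu₀ (h2' ▸ hg.2.2.1 f hf hfn))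
      (fun f hf hfn h2' => hiu₀ (h2' ▸ hg'.2.2.1 f hf hfn))

lemma partnerFor_unique (hP : N.Proper) (hA : N.Acyclic) (hρ : RootChoice N ρfn)
    {G G' : SDG V} (h1 : PartnerFor N ρfn G) (h2 : PartnerFor N ρfn G') : G = G' := by
  apply sdg_ext
  · rw [h1.1.2, h2.1.2]
  · exact Finset.Subset.antisymm (partner_dir_subset hP hA hρ h1 h2)
      (partner_dir_subset hP hA hρ h2 h1)


lemma rho_unique (hP : N.Proper) (hA : N.Acyclic) (hG : RootedPartner G N) {ρ1 ρ2 : V → V}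
    (h1 : RootChoice N ρ1 ∧ PartnerFor N ρ1 G) (h2 : RootChoice N ρ2 ∧ PartnerFor N ρ2 G) :
    ρ1 = ρ2 := by
  have hgood := rootedPartner_good hG
  funext v
  by_cases hv : InRootComp N v
  · have hz1 : G.ideg (ρ1 v) = 0 := by
      have : ρ1 v ∈ {x | G.ideg x = 0} := h1.2.2 ▸ ⟨v, hv, rfl⟩
      exact this
    have hz2 : G.ideg (ρ2 v) = 0 := by
      have : ρ2 v ∈ {x | G.ideg x = 0} := h2.2.2 ▸ ⟨v, hv, rfl⟩
      exact this
    exact root_unique hgood hz1 hz2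
      ((ureach_symm (rho_ureach hP hA h1.1 hv)).trans (rho_ureach hP hA h2.1 hv))
  · rw [h1.1.2 v hv, h2.1.2 v hv]

lemma exists_rho (hP : N.Proper) (hA : N.Acyclic) (hG : RootedPartner G N) :
    ∃ ρ : V → V, RootChoice N ρ ∧ PartnerFor N ρ G := by
  classical
  have hgood := rootedPartner_good hG
  have hchoice : ∀ v, InRootComp N v → ∃ r, G.ideg r = 0 ∧ N.ureach v r :=
    fun v hv => exists_root_in_comp hP hA hgood hv
  refine ⟨fun v => if h : InRootComp N v then (hchoice v h).choose else v, ?_, ?_⟩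
  · constructor
    · intro v hv
      simp only [dif_pos hv]
      refine ⟨sim_of_ureach (hchoice v hv).choose_spec.2, ?_⟩
      intro u hu hsim
      simp only [dif_pos hu, dif_pos hv]
      have huv : N.ureach u v := sim_to_ureach hP hA hv hsim.1
      exact root_unique hgood (hchoice u hu).choose_spec.1 (hchoice v hv).choose_spec.1
        ((ureach_symm (hchoice u hu).choose_spec.2).trans
          (huv.trans (hchoice v hv).choose_spec.2))
    · intro v hv
      simp only [dif_neg hv]
  · refine ⟨hG, ?_⟩
    apply Set.Subset.antisymm
    · intro r hr
      have hrz : G.ideg r = 0 := hr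
      have hroot : InRootComp N r := root_inRootComp hP hA hgood hrz
      refine ⟨r, hroot, ?_⟩
      simp only [dif_pos hroot]
      exact root_unique hgood (hchoice r hroot).choose_spec.1 hrz
        (ureach_symm (hchoice r hroot).choose_spec.2)
    · rintro _ ⟨u, hu, rfl⟩
      have hu' : InRootComp N u := hu
      show G.ideg (if h : InRootComp N u then (hchoice u h).choose else u) = 0
      rw [dif_pos hu']
      exact (hchoice u hu').choose_spec.1


theorem statement_6 {V : Type} [DecidableEq V] (N : SDG V) (hP : N.Proper)
    (hN : IsNetwork N) :
    (∀ ρ : V → V, RootChoice N ρ → ∃! G : SDG V, PartnerFor N ρ G) ∧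
      ∀ G : SDG V, RootedPartner G N →
        ∃! ρ : V → V, RootChoice N ρ ∧ PartnerFor N ρ G := by
  obtain ⟨hA, G₀, hG₀⟩ := hN
  constructor
  · intro ρ hρ
    have hfor : PartnerFor N ρ (N.orient (rcOrient N G₀ ρ)) :=
      ⟨good_rootedPartner hA (rc_good hP hA hG₀ hρ), rc_root_set hP hA hG₀ hρ⟩
    exact ⟨N.orient (rcOrient N G₀ ρ), hfor, fun G' hG' => partnerFor_unique hP hA hρ hG' hfor⟩
  · intro G hG
    obtain ⟨ρ, h1, h2⟩ := exists_rho hP hA hG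
    exact ⟨ρ, ⟨h1, h2⟩, fun ρ' h' => rho_unique hP hA hG h' ⟨h1, h2⟩⟩


end SDG
end
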